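/- arXiv:2212.02272 — 10 statements merged into one kernel-verified Lean document; each statement's English description precedes it below -/
import Mathlib

section
/- If a digraph D contains no directed cycle of odd length as a subdigraph, then the vertices of D can be partitioned into two sets each inducing an acyclic subdigraph (i.e., the dichromatic number of D is at most 2). -/
/-- A digraph: no loops, no parallel arcs, no anti-parallel arcs. -/
structure Digr (V : Type) where
  Adj : V → V → Prop
  no_anti : ∀ u v : V, Adj u v → ¬ Adj v u

namespace Digr

variable {V : Type}

/-- Adjacency in the underlying undirected graph. -/
def Adjd (D : Digr V) (u v : V) : Prop := D.Adj u v ∨ D.Adj v u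

/-- `c : ZMod n → V` is a directed cycle of length `n` (as a subdigraph). -/
def IsDiCycle (D : Digr V) {n : ℕ} (c : ZMod n → V) : Prop :=
  0 < n ∧ Function.Injective c ∧ ∀ i : ZMod n, D.Adj (c i) (c (i + 1))

/-- `S` induces an acyclic subdigraph. -/
def AcyclicOn (D : Digr V) (S : Set V) : Prop :=
  ¬ ∃ (n : ℕ) (c : ZMod n → V), D.IsDiCycle c ∧ ∀ i : ZMod n, c i ∈ S

/-- The dichromatic number of `D` is at most `k`. -/
def DichromAtMost (D : Digr V) (k : ℕ) : Prop :=
  ∃ f : V → Fin k, ∀ i : Fin k, D.AcyclicOn {v | f v = i}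

/-- The subdigraph induced on a set of vertices. -/
def induce (D : Digr V) (S : Set V) : Digr S :=
  ⟨fun a b => D.Adj a.1 b.1, fun a b h => D.no_anti a.1 b.1 h⟩

/-- Out-neighbourhood of a set: vertices outside `X` with an in-neighbour in `X`. -/
def Nout (D : Digr V) (X : Set V) : Set V := {y | y ∉ X ∧ ∃ x ∈ X, D.Adj x y}

/-- In-neighbourhood of a set: vertices outside `X` with an out-neighbour in `X`. -/
def Nin (D : Digr V) (X : Set V) : Set V := {y | y ∉ X ∧ ∃ x ∈ X, D.Adj y x}

/-- Iterated neighbourhood levels: `(N_k⁺(X), N_k⁻(X), ⋃_{i ≤ k} N_i(X))`. -/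
def levAux (D : Digr V) (X : Set V) : ℕ → Set V × Set V × Set V
  | 0 => (X, X, X)
  | k + 1 =>
    let t := levAux D X k
    (D.Nout t.1 \ t.2.2, D.Nin t.2.1 \ t.2.2,
      t.2.2 ∪ (D.Nout t.1 \ t.2.2) ∪ (D.Nin t.2.1 \ t.2.2))

/-- `N_k⁺(X)`. -/
def NlevP (D : Digr V) (X : Set V) (k : ℕ) : Set V := (D.levAux X k).1

/-- `N_k⁻(X)`. -/
def NlevM (D : Digr V) (X : Set V) (k : ℕ) : Set V := (D.levAux X k).2.1

/-- `N_k(X) = N_k⁺(X) ∪ N_k⁻(X)`. -/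
def Nlev (D : Digr V) (X : Set V) (k : ℕ) : Set V := D.NlevP X k ∪ D.NlevM X k

/-- `a → b → c → d` is an induced directed path on 4 vertices. -/
def InducedP4 (D : Digr V) (a b c d : V) : Prop :=
  D.Adj a b ∧ D.Adj b c ∧ D.Adj c d ∧ a ≠ c ∧ a ≠ d ∧ b ≠ d ∧
    ¬ D.Adjd a c ∧ ¬ D.Adjd a d ∧ ¬ D.Adjd b d

/-- `p` is an induced directed path on 6 vertices. -/
def InducedP6 (D : Digr V) (p : Fin 6 → V) : Prop :=
  Function.Injective p ∧ (∀ i : Fin 5, D.Adj (p i.castSucc) (p i.succ)) ∧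
    ∀ i j : Fin 6, (i : ℕ) + 1 < (j : ℕ) → ¬ D.Adjd (p i) (p j)

/-- The underlying undirected graph has no triangle. -/
def TriangleFree (D : Digr V) : Prop :=
  ¬ ∃ a b c : V, D.Adjd a b ∧ D.Adjd b c ∧ D.Adjd a c

/-- A dipolar set. -/
def Dipolar (D : Digr V) (S : Set V) : Prop :=
  ∀ x ∈ S, (∀ y, D.Adj x y → y ∈ S) ∨ (∀ y, D.Adj y x → y ∈ S)

/-- A directed path all of whose arcs are backward with respect to the order `lt`. -/
def BackwardPath (D : Digr V) (lt : V → V → Prop) {m : ℕ} (p : Fin m → V) : Prop :=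
  Function.Injective p ∧
    ∀ i : ℕ, ∀ h : i + 1 < m,
      D.Adj (p ⟨i, Nat.lt_of_succ_lt h⟩) (p ⟨i + 1, h⟩) ∧
        lt (p ⟨i + 1, h⟩) (p ⟨i, Nat.lt_of_succ_lt h⟩)

end Digr

open Digr

namespace DigrAux

variable {V : Type}

/-- existence of a directed walk of length `n` from `u` to `v`. -/
def ReachN (D : Digr V) (u v : V) (n : ℕ) : Prop :=
  ∃ w : ℕ → V, w 0 = u ∧ w n = v ∧ ∀ i < n, D.Adj (w i) (w (i + 1))

lemma reachN_refl (D : Digr V) (u : V) : ReachN D u u 0 :=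
  ⟨fun _ => u, rfl, rfl, fun i hi => absurd hi (Nat.not_lt_zero i)⟩

lemma reachN_single (D : Digr V) {u v : V} (h : D.Adj u v) : ReachN D u v 1 :=
  ⟨fun t => if t = 0 then u else v, by simp, by simp, by
    intro i hi
    interval_cases i
    simpa using h⟩

lemma reachN_trans (D : Digr V) {u v x : V} {n m : ℕ}
    (h1 : ReachN D u v n) (h2 : ReachN D v x m) : ReachN D u x (n + m) := by
  obtain ⟨w1, hw10, hw1n, ha1⟩ := h1
  obtain ⟨w2, hw20, hw2m, ha2⟩ := h2
  refine ⟨fun t => if t ≤ n then w1 t else w2 (t - n), by simp [hw10], ?_, ?_⟩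
  · by_cases hm : m = 0
    · subst hm
      simp only [Nat.add_zero, if_pos le_rfl, hw1n]
      rw [← hw20, hw2m]
    · have hnn : ¬ (n + m ≤ n) := by omega
      simp only [if_neg hnn]
      rw [show n + m - n = m by omega, hw2m]
  · intro t ht
    rcases Nat.lt_or_ge t n with hlt | hge
    · simp only [if_pos (by omega : t ≤ n), if_pos (by omega : t + 1 ≤ n)]
      exact ha1 t hlt
    · rcases Nat.eq_or_lt_of_le hge with heq | hgt
      · have e : t = n := heq.symm
        have h1 : ¬ (t + 1 ≤ n) := by omega
        simp only [if_pos (le_of_eq e), if_neg h1]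
        rw [e, hw1n, ← hw20, show n + 1 - n = 1 by omega]
        exact ha2 0 (by omega)
      · have h1 : ¬ (t ≤ n) := by omega
        have h2 : ¬ (t + 1 ≤ n) := by omega
        simp only [if_neg h1, if_neg h2]
        rw [show t + 1 - n = (t - n) + 1 by omega]
        exact ha2 (t - n) (by omega)

/-- Wrapping a closed walk into an everywhere-defined walk via mod. -/
lemma wrapAdj (D : Digr V) (W : ℕ → V) (i m : ℕ) (hm : 0 < m)
    (hadj : ∀ t, i ≤ t → t < i + m → D.Adj (W t) (W (t + 1)))
    (hclose : W (i + m) = W i) :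
    ∀ t, D.Adj (W (i + t % m)) (W (i + (t + 1) % m)) := by
  intro t
  have hr : t % m < m := Nat.mod_lt _ hm
  have h1 : (t + 1) % m = (t % m + 1) % m := by
    conv_lhs => rw [show t + 1 = m * (t / m) + (t % m + 1) by
      have := Nat.div_add_mod t m; omega]
    rw [Nat.mul_add_mod]
  rcases Nat.lt_or_ge (t % m + 1) m with h2 | h2
  · rw [h1, Nat.mod_eq_of_lt h2, ← Nat.add_assoc]
    exact hadj _ (by omega) (by omega)
  · have h3 : t % m + 1 = m := by omega
    rw [h1, h3, Nat.mod_self]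
    have h4 : W (i + 0) = W (i + t % m + 1) := by
      rw [Nat.add_zero, ← hclose]
      congr 1
      omega
    rw [h4]
    exact hadj _ (by omega) (by omega)

/-- A fully periodic walk of odd period yields an odd directed cycle. -/
lemma periodic_odd (D : Digr V) :
    ∀ n : ℕ, 0 < n → Odd n → ∀ W : ℕ → V, (∀ t, D.Adj (W t) (W (t + 1))) →
      (∀ t, W (t + n) = W t) →
      ∃ (m : ℕ) (c : ZMod m → V), Odd m ∧ D.IsDiCycle c := by
  intro n
  induction n using Nat.strong_induction_on with
  | _ n IH =>
  intro hn hodd W hadj hper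
  have hWe : ∀ a b : ℕ, a % n = b % n → W a = W b := by
    have hq : ∀ q r : ℕ, W (r + n * q) = W r := by
      intro q
      induction q with
      | zero => intro r; simp
      | succ q ih =>
        intro r
        rw [show r + n * (q + 1) = (r + n * q) + n by ring, hper, ih]
    intro a b hab
    calc W a = W (a % n + n * (a / n)) := by congr 1; have := Nat.div_add_mod a n; omega
    _ = W (a % n) := hq _ _
    _ = W (b % n) := by rw [hab]
    _ = W (b % n + n * (b / n)) := (hq _ _).symm
    _ = W b := by congr 1; have := Nat.div_add_mod b n; omega
  by_cases hinj : ∀ a b : ℕ, a < b → b < n → W a ≠ W b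
  · haveI : NeZero n := ⟨hn.ne'⟩
    refine ⟨n, fun k => W k.val, hodd, hn, ?_, ?_⟩
    · intro k1 k2 he
      simp only at he
      rcases Nat.lt_trichotomy k1.val k2.val with hlt | heq | hlt
      · exact absurd he (hinj _ _ hlt (ZMod.val_lt k2))
      · exact ZMod.val_injective n heq
      · exact absurd he.symm (hinj _ _ hlt (ZMod.val_lt k1))
    · intro k
      have e0 : ((k.val + 1 : ℕ) : ZMod n) = k + 1 := by
        rw [Nat.cast_add, Nat.cast_one, ZMod.natCast_rightInverse k]
      have e1 : (k + 1).val = (k.val + 1) % n := by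
        rw [← e0, ZMod.val_natCast]
      have e2 : W ((k + 1).val) = W (k.val + 1) :=
        hWe _ _ (by rw [e1, Nat.mod_mod_of_dvd _ dvd_rfl])
      show D.Adj (W k.val) (W ((k + 1).val))
      rw [e2]
      exact hadj k.val
  · push_neg at hinj
    obtain ⟨a, b, hab, hbn, hW⟩ := hinj
    have hm0 : 0 < b - a := by omega
    have hm0' : 0 < n - (b - a) := by omega
    have hcl1 : W (a + (b - a)) = W a := by
      rw [show a + (b - a) = b by omega, hW]
    rcases Nat.even_or_odd (b - a) with hev | hod
    · -- the complementary closed walk has odd length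
      have hodd2 : Odd (n - (b - a)) := by
        rcases hodd with ⟨p, hp⟩
        rcases hev with ⟨q, hq⟩
        exact ⟨p - q, by omega⟩
      have hcl2 : W (b + (n - (b - a))) = W b := by
        rw [show b + (n - (b - a)) = a + n by omega, hper, hW]
      have hA := wrapAdj D W b (n - (b - a)) hm0' (fun t _ _ => hadj t) hcl2
      exact IH (n - (b - a)) (by omega) hm0' hodd2 (fun t => W (b + t % (n - (b - a))))
        hA (fun t => by simp only [Nat.add_mod_right])
    · have hA := wrapAdj D W a (b - a) hm0 (fun t _ _ => hadj t) hcl1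
      exact IH (b - a) (by omega) hm0 hod (fun t => W (a + t % (b - a)))
        hA (fun t => by simp only [Nat.add_mod_right])

/-- An odd closed walk yields an odd directed cycle. -/
lemma closed_odd (D : Digr V) {u : V} {n : ℕ} (hodd : Odd n) (hr : ReachN D u u n) :
    ∃ (m : ℕ) (c : ZMod m → V), Odd m ∧ D.IsDiCycle c := by
  obtain ⟨w, hw0, hwn, hadj⟩ := hr
  have hn : 0 < n := by rcases hodd with ⟨k, hk⟩; omega
  have hcl : w (0 + n) = w 0 := by rw [Nat.zero_add, hwn, hw0]
  have hA := wrapAdj D w 0 n hn (fun t _ ht2 => hadj t (by omega)) hcl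
  exact periodic_odd D n hn hodd (fun t => w (0 + t % n)) hA
    (fun t => by simp only [Nat.add_mod_right])

def Reach (D : Digr V) (u v : V) : Prop := ∃ n, ReachN D u v n

def SEq (D : Digr V) (u v : V) : Prop := Reach D u v ∧ Reach D v u

lemma seq_equivalence (D : Digr V) : Equivalence (SEq D) where
  refl u := ⟨⟨0, reachN_refl D u⟩, ⟨0, reachN_refl D u⟩⟩
  symm h := ⟨h.2, h.1⟩
  trans h1 h2 :=
    ⟨⟨_, reachN_trans D h1.1.choose_spec h2.1.choose_spec⟩,
     ⟨_, reachN_trans D h2.2.choose_spec h1.2.choose_spec⟩⟩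

def strSetoid (D : Digr V) : Setoid V := ⟨SEq D, seq_equivalence D⟩

noncomputable def rep (D : Digr V) (v : V) : V := (Quotient.mk (strSetoid D) v).out

lemma rep_seq (D : Digr V) (v : V) : SEq D (rep D v) v :=
  Quotient.exact (s := strSetoid D) (Quotient.out_eq (Quotient.mk (strSetoid D) v))

lemma rep_eq (D : Digr V) {u v : V} (h : SEq D u v) : rep D u = rep D v := by
  unfold rep
  rw [Quotient.sound (s := strSetoid D) h]

noncomputable def nlen (D : Digr V) (v : V) : ℕ := (rep_seq D v).1.choose

lemma nlen_spec (D : Digr V) (v : V) : ReachN D (rep D v) v (nlen D v) :=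
  (rep_seq D v).1.choose_spec

lemma parity (D : Digr V)
    (h : ¬ ∃ (n : ℕ) (c : ZMod n → V), Odd n ∧ D.IsDiCycle c)
    {u v : V} {a b k : ℕ}
    (h1 : ReachN D u v a) (h2 : ReachN D u v b) (h3 : ReachN D v u k) :
    a % 2 = b % 2 := by
  by_contra hne
  have hc : (a + k) % 2 = 1 ∨ (b + k) % 2 = 1 := by omega
  rcases hc with hc | hc
  · exact h (closed_odd D (Nat.odd_iff.mpr hc) (reachN_trans D h1 h3))
  · exact h (closed_odd D (Nat.odd_iff.mpr hc) (reachN_trans D h2 h3))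

end DigrAux

open DigrAux

/-- If a digraph `D` contains no directed cycle of odd length, then its
dichromatic number is at most 2. -/
theorem stmt0 {V : Type} (D : Digr V)
    (h : ¬ ∃ (n : ℕ) (c : ZMod n → V), Odd n ∧ D.IsDiCycle c) :
    D.DichromAtMost 2 := by
  refine ⟨fun v => ⟨nlen D v % 2, by omega⟩, ?_⟩
  intro i
  rintro ⟨n, c, ⟨hn, hcinj, hcadj⟩, hmem⟩
  haveI : NeZero n := ⟨hn.ne'⟩
  have hround : ∀ (a : ZMod n) (k : ℕ), ReachN D (c a) (c (a + (k : ZMod n))) k := by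
    intro a k
    induction k with
    | zero => simpa using reachN_refl D (c a)
    | succ k ih =>
      have h2 := reachN_trans D ih (reachN_single D (hcadj (a + (k : ZMod n))))
      have e : a + ((k + 1 : ℕ) : ZMod n) = a + (k : ZMod n) + 1 := by
        push_cast
        ring
      rw [e]
      exact h2
  have hreach : ∀ a b : ZMod n, Reach D (c a) (c b) := by
    intro a b
    refine ⟨(b - a).val, ?_⟩
    have h2 := hround a (b - a).val
    rw [ZMod.natCast_rightInverse (b - a)] at h2
    rwa [show a + (b - a) = b by ring] at h2
  have hSE : ∀ a b : ZMod n, SEq D (c a) (c b) := fun a b => ⟨hreach a b, hreach b a⟩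
  have hrepc : ∀ a : ZMod n, rep D (c a) = rep D (c 0) := fun a => rep_eq D (hSE a 0)
  have emod : nlen D (c 0) % 2 = nlen D (c 1) % 2 := by
    have e0 := (hmem 0).trans (hmem 1).symm
    exact congrArg Fin.val e0
  have w1 : ReachN D (rep D (c 0)) (c 1) (nlen D (c 1)) := by
    have h2 := nlen_spec D (c 1)
    rwa [hrepc 1] at h2
  have w2 : ReachN D (rep D (c 0)) (c 1) (nlen D (c 0) + 1) := by
    have harc : D.Adj (c 0) (c 1) := by simpa using hcadj 0
    exact reachN_trans D (nlen_spec D (c 0)) (reachN_single D harc)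
  have w3 : Reach D (c 1) (rep D (c 0)) := by
    have h2 := (rep_seq D (c 1)).2
    rwa [hrepc 1] at h2
  obtain ⟨k, hk⟩ := w3
  have hpar := parity D h w1 w2 hk
  omega
end

section
/- For a digraph D and an integer k, the following are equivalent: (1) the dichromatic number of D is at most k; (2) there exists a total ordering of V(D) such that there is no directed path on k+1 vertices all of whose arcs are backward (an arc xy is backward if y precedes x in the ordering). -/
/-!
Given a colouring `f` with acyclic colour classes, order the vertices by colour and, inside a
class, by a linear extension of reachability, which is a strict order because the class is
acyclic. Every backward arc then strictly lowers the colour, so a backward path has at most `k`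
vertices. Conversely, given the ordering, label each vertex by the number of arcs of a longest
backward path starting at it. The label lies in `[0, k)` and strictly drops along backward arcs
(prepend the tail to a longest path from the head), so inside a label class every arc goes
forward and no directed cycle fits.
-/

theorem Relation.TransGen.exists_seq {α : Type*} {r : α → α → Prop} {a b : α}
    (h : Relation.TransGen r a b) :
    ∃ n, 0 < n ∧ ∃ w : ℕ → α, w 0 = a ∧ w n = b ∧ ∀ i < n, r (w i) (w (i + 1)) := by
  induction h with
  | @single b hab =>
    exact ⟨1, one_pos, fun i => if i = 0 then a else b, rfl, rfl, by simpa using hab⟩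
  | @tail b c _ hbc ih =>
    obtain ⟨n, hn, w, hw0, hwn, hw⟩ := ih
    refine ⟨n + 1, n.succ_pos, fun i => if i ≤ n then w i else c, by simp [hw0], by simp, ?_⟩
    intro i hi
    rcases Nat.lt_or_ge i n with hin | hin
    · simpa [hin.le, Nat.succ_le_of_lt hin] using hw i hin
    · obtain rfl : i = n := by omega
      simpa [hwn] using hbc

theorem exists_isStrictTotalOrder_of_isStrictOrder {α : Type*} (r : α → α → Prop)
    [IsStrictOrder α r] : ∃ lt : α → α → Prop, IsStrictTotalOrder α lt ∧ ∀ a b, r a b → lt a b := by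
  let : PartialOrder α := partialOrderOfSO r
  refine ⟨fun a b => toLinearExtension a < toLinearExtension b,
    inferInstanceAs (IsStrictTotalOrder (LinearExtension α) (· < ·)), fun a b hab => ?_⟩
  exact (toLinearExtension.monotone (Or.inr hab)).lt_of_ne fun h =>
    irrefl_of r a (by rwa [show a = b from h] at hab ⊢)

namespace Digr

variable {V : Type} {D : Digr V}

def IsClosedWalkIn (D : Digr V) (S : Set V) (n : ℕ) (w : ℕ → V) : Prop :=
  0 < n ∧ w n = w 0 ∧ ∀ i < n, D.Adj (w i) (w (i + 1)) ∧ w i ∈ S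

theorem IsClosedWalkIn.segment {S : Set V} {n : ℕ} {w : ℕ → V} (hw : D.IsClosedWalkIn S n w)
    {i j : ℕ} (hij : i < j) (hjn : j < n) (hwij : w i = w j) :
    D.IsClosedWalkIn S (j - i) (fun t => w (i + t)) := by
  refine ⟨by omega, by simp [Nat.add_sub_cancel' hij.le, hwij], fun t ht => ?_⟩
  simpa only [Nat.add_assoc] using hw.2.2 (i + t) (by omega)

theorem IsClosedWalkIn.not_acyclicOn {S : Set V} {n : ℕ} {w : ℕ → V}
    (hw : D.IsClosedWalkIn S n w) (hinj : Set.InjOn w (Set.Iio n)) : ¬ D.AcyclicOn S := by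
  obtain ⟨hn, hclosed, hstep⟩ := hw
  have : NeZero n := ⟨hn.ne'⟩
  refine fun hS => hS ⟨n, fun i => w i.val, ⟨hn, fun i j hij => ZMod.val_injective n
    (hinj (ZMod.val_lt i) (ZMod.val_lt j) hij), fun i => ?_⟩, fun i => (hstep _ (ZMod.val_lt i)).2⟩
  have hsucc : w (i + 1).val = w (i.val + 1) := by
    rw [ZMod.val_add, ZMod.val_one_eq_one_mod, Nat.add_mod_mod]
    obtain h | h : i.val + 1 < n ∨ i.val + 1 = n := by have := ZMod.val_lt i; omega
    · rw [Nat.mod_eq_of_lt h]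
    · rw [h, Nat.mod_self, hclosed]
  simpa only [hsucc] using (hstep _ (ZMod.val_lt i)).1

/-- A shortest closed walk in `S` repeats no vertex, so it is a directed cycle. -/
theorem AcyclicOn.not_isClosedWalkIn {S : Set V} (hS : D.AcyclicOn S) :
    ∀ (n : ℕ) (w : ℕ → V), ¬ D.IsClosedWalkIn S n w := by
  intro n
  induction n using Nat.strong_induction_on with
  | _ n ih =>
  intro w hw
  refine hw.not_acyclicOn (fun i (hi : i < n) j (hj : j < n) hwij => ?_) hS
  by_contra hne
  rcases Nat.lt_or_gt_of_ne hne with h | h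
  · exact ih (j - i) (by omega) _ (hw.segment h hj hwij)
  · exact ih (i - j) (by omega) _ (hw.segment h hi hwij.symm)

theorem not_transGen_adj_of_acyclicOn_fibres {ι : Type*} {f : V → ι}
    (hf : ∀ i, D.AcyclicOn {v | f v = i}) (v : V) :
    ¬ Relation.TransGen (fun a b => D.Adj a b ∧ f a = f b) v v := by
  intro hv
  obtain ⟨n, hn, w, hw0, hwn, hw⟩ := hv.exists_seq
  have hcol : ∀ i ≤ n, f (w i) = f v := by
    intro i hi
    induction i with
    | zero => rw [hw0]
    | succ i ih => rw [← (hw i (by omega)).2, ih (by omega)]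
  exact (hf (f v)).not_isClosedWalkIn n w
    ⟨hn, by rw [hwn, hw0], fun i hi => ⟨(hw i hi).1, hcol i hi.le⟩⟩

theorem exists_isStrictTotalOrder_of_acyclicOn_fibres {ι : Type*} [LinearOrder ι] {f : V → ι}
    (hf : ∀ i, D.AcyclicOn {v | f v = i}) :
    ∃ lt : V → V → Prop, IsStrictTotalOrder V lt ∧ ∀ x y, D.Adj x y → lt y x → f y < f x := by
  set T := Relation.TransGen (fun a b => D.Adj a b ∧ f a = f b)
  have hTf : ∀ {a b}, T a b → f a = f b := fun h => by
    induction h with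
    | single h => exact h.2
    | tail _ h ih => exact ih.trans h.2
  let P a b := f a < f b ∨ T a b
  have : IsStrictOrder V P :=
    { irrefl a := by
        rintro (h | h)
        exacts [lt_irrefl _ h, not_transGen_adj_of_acyclicOn_fibres hf a h]
      trans a b c := by
        rintro (hab | hab) (hbc | hbc)
        · exact .inl (hab.trans hbc)
        · exact .inl (hab.trans_eq (hTf hbc))
        · exact .inl ((hTf hab).trans_lt hbc)
        · exact .inr (hab.trans hbc) }
  obtain ⟨lt, hlt, hPlt⟩ := exists_isStrictTotalOrder_of_isStrictOrder P
  refine ⟨lt, hlt, fun x y hxy hyx => ?_⟩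
  rcases lt_trichotomy (f y) (f x) with h | h | h
  · exact h
  · exact absurd (hPlt x y (.inr (.single ⟨hxy, h.symm⟩))) (asymm hyx)
  · exact absurd (hPlt x y (.inl h)) (asymm hyx)

section BackwardPath

variable {lt : V → V → Prop}

theorem BackwardPath.succ_le_of_strictAnti {k n : ℕ} {g : V → Fin k}
    (hg : ∀ x y, D.Adj x y → lt y x → g y < g x) {p : Fin (n + 1) → V}
    (hp : D.BackwardPath lt p) : n + 1 ≤ k :=
  Fin.le_of_injective (g ∘ p) (Fin.strictAnti_iff_succ_lt.2 fun i =>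
    hg _ _ (hp.2 i (by omega)).1 (hp.2 i (by omega)).2).injective

theorem BackwardPath.castLE {m m' : ℕ} (h : m' ≤ m) {p : Fin m → V} (hp : D.BackwardPath lt p) :
    D.BackwardPath lt (p ∘ Fin.castLE h) :=
  ⟨hp.1.comp (Fin.castLE_injective h), fun i hi => hp.2 i (hi.trans_le h)⟩

theorem BackwardPath.rel_of_lt [IsTrans V lt] {m : ℕ} {p : Fin m → V}
    (hp : D.BackwardPath lt p) {i j : Fin m} (hij : i < j) : lt (p j) (p i) := by
  obtain ⟨j, hj⟩ := j
  induction j with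
  | zero => exact absurd (Fin.lt_def.1 hij) (Nat.not_lt_zero _)
  | succ j ih =>
    rcases Nat.lt_succ_iff_lt_or_eq.1 (Fin.lt_def.1 hij) with hi | hi
    · exact _root_.trans (hp.2 j hj).2 (ih (by omega) hi)
    · rw [show i = ⟨j, by omega⟩ from Fin.ext hi]
      exact (hp.2 j hj).2

theorem BackwardPath.cons [IsStrictOrder V lt] {m : ℕ} {p : Fin (m + 1) → V}
    (hp : D.BackwardPath lt p) {x : V} (hx : D.Adj x (p 0)) (hlt : lt (p 0) x) :
    D.BackwardPath lt (Fin.cons x p : Fin (m + 2) → V) := by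
  refine ⟨Fin.cons_injective_iff.2 ⟨fun ⟨i, hi⟩ => ?_, hp.1⟩, fun i h => ?_⟩
  · rcases eq_or_ne i 0 with rfl | hi0
    · exact irrefl x (hi ▸ hlt)
    · exact irrefl x (hi ▸ _root_.trans (hp.rel_of_lt (Fin.pos_of_ne_zero hi0)) hlt)
  · cases i with
    | zero => exact ⟨hx, hlt⟩
    | succ i => exact hp.2 i (by omega)

def backwardLengths (D : Digr V) (lt : V → V → Prop) (v : V) : Set ℕ :=
  {m | ∃ p : Fin (m + 1) → V, D.BackwardPath lt p ∧ p 0 = v}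

/-- Junk value `0` if the lengths are unbounded; under `hk` below they are all `< k`. -/
noncomputable def backwardHeight (D : Digr V) (lt : V → V → Prop) (v : V) : ℕ :=
  sSup (D.backwardLengths lt v)

theorem lt_of_mem_backwardLengths {k : ℕ} (hk : ∀ p : Fin (k + 1) → V, ¬ D.BackwardPath lt p)
    {v : V} {m : ℕ} (hm : m ∈ D.backwardLengths lt v) : m < k := by
  obtain ⟨p, hp, -⟩ := hm
  by_contra! hkm
  exact hk _ (hp.castLE (Nat.succ_le_succ hkm))

theorem backwardHeight_mem {k : ℕ} (hk : ∀ p : Fin (k + 1) → V, ¬ D.BackwardPath lt p)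
    (v : V) : D.backwardHeight lt v ∈ D.backwardLengths lt v :=
  Nat.sSup_mem ⟨0, fun _ => v, ⟨fun a b _ => Fin.ext (by omega), fun _ h => by omega⟩, rfl⟩
    ⟨k, fun _ hm => (lt_of_mem_backwardLengths hk hm).le⟩

theorem backwardHeight_lt {k : ℕ} (hk : ∀ p : Fin (k + 1) → V, ¬ D.BackwardPath lt p)
    (v : V) : D.backwardHeight lt v < k :=
  lt_of_mem_backwardLengths hk (backwardHeight_mem hk v)

theorem backwardHeight_lt_of_adj [IsStrictOrder V lt] {k : ℕ}
    (hk : ∀ p : Fin (k + 1) → V, ¬ D.BackwardPath lt p) {x y : V} (hxy : D.Adj x y) (hyx : lt y x) :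
    D.backwardHeight lt y < D.backwardHeight lt x := by
  obtain ⟨p, hp, hp0⟩ := backwardHeight_mem hk y
  exact Nat.lt_of_succ_le (le_csSup ⟨k, fun _ hm => (lt_of_mem_backwardLengths hk hm).le⟩
    ⟨_, hp.cons (by rwa [hp0]) (by rwa [hp0]), rfl⟩)

end BackwardPath

theorem acyclicOn_of_forall_adj_rel {lt : V → V → Prop} [IsStrictOrder V lt] {S : Set V}
    (h : ∀ x ∈ S, ∀ y ∈ S, D.Adj x y → lt x y) : D.AcyclicOn S := by
  rintro ⟨n, c, ⟨hn, -, hc⟩, hcS⟩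
  have hstep (i : ZMod n) : lt (c i) (c (i + 1)) := h _ (hcS _) _ (hcS _) (hc i)
  have hchain : ∀ m : ℕ, lt (c 0) (c (m + 1 : ℕ)) := by
    intro m
    induction m with
    | zero => simpa using hstep 0
    | succ m ih => exact _root_.trans ih (by simpa [Nat.cast_succ] using hstep (m + 1 : ℕ))
  have := hchain (n - 1)
  rw [Nat.sub_add_cancel hn, ZMod.natCast_self] at this
  exact irrefl _ this

theorem acyclicOn_fibres_of_strictAnti {lt : V → V → Prop} [IsStrictTotalOrder V lt]
    {ι : Type*} [Preorder ι] {g : V → ι} (hg : ∀ x y, D.Adj x y → lt y x → g y < g x) (i : ι) :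
    D.AcyclicOn {v | g v = i} := by
  refine acyclicOn_of_forall_adj_rel (lt := lt) fun x (hx : g x = i) y (hy : g y = i) hxy => ?_
  rcases trichotomous_of lt x y with h | rfl | h
  · exact h
  · exact absurd hxy (D.no_anti x x hxy)
  · exact absurd (hg x y hxy h) (by rw [hx, hy]; exact lt_irrefl i)

end Digr

open Digr

/-- Gallai-Roy-Vitaver for the dichromatic number: `χ⃗(D) ≤ k` iff there is a
total ordering of the vertices with no backward directed path on `k+1`
vertices. -/
theorem stmt3 {V : Type} (D : Digr V) (k : ℕ) :
    D.DichromAtMost k ↔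
      ∃ lt : V → V → Prop, IsStrictTotalOrder V lt ∧
        ∀ p : Fin (k + 1) → V, ¬ D.BackwardPath lt p := by
  constructor
  · rintro ⟨f, hf⟩
    obtain ⟨lt, hlt, hf_anti⟩ := exists_isStrictTotalOrder_of_acyclicOn_fibres hf
    exact ⟨lt, hlt, fun p hp => Nat.lt_irrefl k (hp.succ_le_of_strictAnti hf_anti)⟩
  · rintro ⟨lt, hlt, hk⟩
    exact ⟨fun v => ⟨D.backwardHeight lt v, backwardHeight_lt hk v⟩,
      acyclicOn_fibres_of_strictAnti fun x y hxy hyx => backwardHeight_lt_of_adj hk hxy hyx⟩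
end

section
/- If the dichromatic number of a digraph D is at most k, then there is a linear ordering of V(D) such that every directed path consisting only of backward arcs has at most k vertices. -/
open Digr

/-!
Fix a colouring `f` with acyclic colour classes. Within a class, reachability along arcs of that
class is a partial order, so "`f a < f b`, or `b` is reachable from `a` inside its colour class"
is a partial order on `V`; take a linear extension. An arc inside a class then points forward, so
a backward arc strictly decreases the colour, and a backward path meets each colour at most once.
-/

theorem exists_walk_of_transGen {V : Type} {R : V → V → Prop} {a b : V}
    (h : Relation.TransGen R a b) :
    ∃ n, 0 < n ∧ ∃ w : ℕ → V, w 0 = a ∧ w n = b ∧ ∀ i < n, R (w i) (w (i + 1)) := by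
  induction h with
  | @single c hac =>
    refine ⟨1, one_pos, fun i => if i = 0 then a else c, rfl, rfl, ?_⟩
    intro i hi
    obtain rfl : i = 0 := by omega
    exact hac
  | @tail b c _ hbc ih =>
    obtain ⟨n, hn, w, hw0, hwn, hw⟩ := ih
    refine ⟨n + 1, n.succ_pos, Function.update w (n + 1) c, ?_, by simp, ?_⟩
    · simpa [Function.update_of_ne (Nat.succ_ne_zero n).symm] using hw0
    intro i hi
    rcases Nat.lt_succ_iff_lt_or_eq.1 hi with hi | rfl
    · rw [Function.update_of_ne (by omega), Function.update_of_ne (by omega)]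
      exact hw i hi
    · simpa [hwn] using hbc

theorem isStrictTotalOrder_not_swap {α : Type*} (s : α → α → Prop) [IsLinearOrder α s] :
    IsStrictTotalOrder α (fun a b => ¬ s b a) where
  trichotomous _ _ hab hba := antisymm (not_not.1 hba) (not_not.1 hab)
  irrefl a h := h (refl a)
  trans a b c hab hbc hca := by
    rcases total_of s a b with h | h
    · exact hbc (_root_.trans hca h)
    · exact hab h

namespace Digr

variable {V : Type}

theorem isDiCycle_of_closedWalk (D : Digr V) {n : ℕ} (hn : 0 < n) {w : ℕ → V}
    (hw : ∀ i < n, D.Adj (w i) (w (i + 1))) (hclosed : w n = w 0)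
    (hinj : ∀ i < n, ∀ j < n, w i = w j → i = j) :
    D.IsDiCycle (fun i : ZMod n => w i.val) := by
  have : NeZero n := ⟨hn.ne'⟩
  refine ⟨hn, fun i j hij => ZMod.val_injective n (hinj _ i.val_lt _ j.val_lt hij), fun i => ?_⟩
  change D.Adj (w i.val) (w (i + 1).val)
  rw [ZMod.val_add, ZMod.val_one_eq_one_mod, Nat.add_mod_mod]
  obtain hi | hi : i.val + 1 < n ∨ i.val + 1 = n := by have := i.val_lt; omega
  · rw [Nat.mod_eq_of_lt hi]
    exact hw _ i.val_lt
  · simpa only [hi, Nat.mod_self, ← hclosed] using hw _ i.val_lt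

-- A closed walk repeating a vertex is shortcut there to a shorter closed walk.
theorem exists_isDiCycle_of_closedWalk (D : Digr V) (n : ℕ) (hn : 0 < n) (w : ℕ → V)
    (hw : ∀ i < n, D.Adj (w i) (w (i + 1))) (hclosed : w n = w 0) :
    ∃ (m : ℕ) (c : ZMod m → V), D.IsDiCycle c ∧ ∀ i, ∃ j < n, c i = w j := by
  induction n using Nat.strong_induction_on generalizing w with
  | _ n ih =>
  by_cases hinj : ∀ i < n, ∀ j < n, w i = w j → i = j
  · have : NeZero n := ⟨hn.ne'⟩
    exact ⟨n, _, D.isDiCycle_of_closedWalk hn hw hclosed hinj, fun i => ⟨i.val, i.val_lt, rfl⟩⟩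
  push Not at hinj
  obtain ⟨i, hi, j, hj, hij, hne⟩ := hinj
  wlog hlt : i < j generalizing i j
  · exact this j hj i hi hij.symm hne.symm (by omega)
  obtain ⟨m, c, hc, hcw⟩ := ih (j - i) (by omega) (by omega) (fun t => w (i + t))
    (fun t ht => by simpa [Nat.add_assoc] using hw (i + t) (by omega))
    (by simpa [Nat.add_sub_cancel' hlt.le] using hij.symm)
  refine ⟨m, c, hc, fun t => ?_⟩
  obtain ⟨s, hs, hcs⟩ := hcw t
  exact ⟨i + s, by omega, hcs⟩

section Colouring

variable (D : Digr V) {α : Type*} (f : V → α)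

def MonoAdj (a b : V) : Prop := D.Adj a b ∧ f a = f b

variable {D f}

theorem eq_of_reflTransGen_monoAdj {a b : V}
    (h : Relation.ReflTransGen (D.MonoAdj f) a b) : f a = f b := by
  induction h with
  | refl => rfl
  | tail _ hbc ih => exact ih.trans hbc.2

theorem not_transGen_monoAdj_self (hf : ∀ c, D.AcyclicOn {v | f v = c}) (a : V) :
    ¬ Relation.TransGen (D.MonoAdj f) a a := by
  intro h
  obtain ⟨n, hn, w, hw0, hwn, hw⟩ := exists_walk_of_transGen h
  have hcolour : ∀ i ≤ n, f (w i) = f a := by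
    intro i hi
    induction i with
    | zero => rw [hw0]
    | succ i ih => rw [← (hw i hi).2, ih (by omega)]
  obtain ⟨m, c, hc, hcw⟩ := D.exists_isDiCycle_of_closedWalk n hn w
    (fun i hi => (hw i hi).1) (hwn.trans hw0.symm)
  refine hf (f a) ⟨m, c, hc, fun i => ?_⟩
  obtain ⟨j, hj, hcj⟩ := hcw i
  exact hcj ▸ hcolour j hj.le

variable (D f) [LinearOrder α]

def ColourReach (a b : V) : Prop := f a < f b ∨ Relation.ReflTransGen (D.MonoAdj f) a b

theorem isPartialOrder_colourReach (hf : ∀ c, D.AcyclicOn {v | f v = c}) :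
    IsPartialOrder V (D.ColourReach f) where
  refl _ := Or.inr .refl
  trans a b c := by
    rintro (hab | hab) (hbc | hbc)
    · exact Or.inl (hab.trans hbc)
    · exact Or.inl (hab.trans_eq (eq_of_reflTransGen_monoAdj hbc))
    · exact Or.inl ((eq_of_reflTransGen_monoAdj hab).trans_lt hbc)
    · exact Or.inr (hab.trans hbc)
  antisymm a b := by
    rintro (hab | hab) (hba | hba)
    · exact (hab.asymm hba).elim
    · exact (hab.ne (eq_of_reflTransGen_monoAdj hba).symm).elim
    · exact (hba.ne (eq_of_reflTransGen_monoAdj hab).symm).elim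
    · rcases Relation.reflTransGen_iff_eq_or_transGen.1 hab with rfl | hab
      · rfl
      · exact (not_transGen_monoAdj_self hf a (hab.trans_left hba)).elim

theorem exists_strictTotalOrder_colour_lt_of_backward_adj (hf : ∀ c, D.AcyclicOn {v | f v = c}) :
    ∃ lt : V → V → Prop, IsStrictTotalOrder V lt ∧ ∀ a b, D.Adj a b → lt b a → f b < f a := by
  have := D.isPartialOrder_colourReach f hf
  obtain ⟨s, hs, hrs⟩ := extend_partialOrder (D.ColourReach f)
  refine ⟨fun a b => ¬ s b a, isStrictTotalOrder_not_swap s, fun a b hab hba => ?_⟩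
  by_contra! hle
  exact hba (hrs _ _ (hle.lt_or_eq.imp id fun h => .single ⟨hab, h⟩))

end Colouring

theorem BackwardPath.length_le {D : Digr V} {lt : V → V → Prop} {m k : ℕ} {p : Fin m → V}
    (hp : D.BackwardPath lt p) {f : V → Fin k} (hf : ∀ a b, D.Adj a b → lt b a → f b < f a) :
    m ≤ k := by
  cases m with
  | zero => exact k.zero_le
  | succ n =>
    have hanti : StrictAnti (f ∘ p) := Fin.strictAnti_iff_succ_lt.2 fun i =>
      hf _ _ (hp.2 i (Nat.succ_lt_succ i.2)).1 (hp.2 i (Nat.succ_lt_succ i.2)).2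
    exact Fin.le_of_injective _ hanti.injective

end Digr

/-- If `χ⃗(D) ≤ k` then there is a linear ordering of the vertices such that
every backward directed path has at most `k` vertices. -/
theorem stmt4 {V : Type} (D : Digr V) (k : ℕ) (hD : D.DichromAtMost k) :
    ∃ lt : V → V → Prop, IsStrictTotalOrder V lt ∧
      ∀ (m : ℕ) (p : Fin m → V), D.BackwardPath lt p → m ≤ k := by
  obtain ⟨f, hf⟩ := hD
  obtain ⟨lt, hlt, hback⟩ := D.exists_strictTotalOrder_colour_lt_of_backward_adj f hf
  exact ⟨lt, hlt, fun m p hp => hp.length_le hback⟩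
end

section
/- Let D be a digraph, S a dipolar set of D, S^+ = {x in S : all in-neighbours of x are in S} and S^- = {x in S : all out-neighbours of x are in S}. Then every directed cycle of D that intersects both S and V(D) \ S intersects both S^+ and S^-. -/
open Digr

lemma zmod_invariant {n : ℕ} (hn : 0 < n) (P : ZMod n → Prop)
    (hstep : ∀ k, P k → P (k + 1)) {i : ZMod n} (hi : P i) : ∀ j, P j := by
  have key : ∀ m : ℕ, P (i + (m : ZMod n)) := by
    intro m
    induction m with
    | zero => simpa using hi
    | succ m ih =>
      have h2 : i + ((m + 1 : ℕ) : ZMod n) = (i + m) + 1 := by push_cast; ring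
      rw [h2]
      exact hstep _ ih
  intro j
  haveI : NeZero n := ⟨hn.ne'⟩
  have : j = i + ((j - i).val : ZMod n) := by
    rw [ZMod.natCast_val, ZMod.cast_id]
    ring
  rw [this]
  exact key _

/-- Any directed cycle meeting both a dipolar set `S` and its complement meets
both `S⁺ = {x ∈ S : N⁻(x) ⊆ S}` and `S⁻ = {x ∈ S : N⁺(x) ⊆ S}`. -/
theorem stmt7 {V : Type} (D : Digr V) (S : Set V) (hS : D.Dipolar S)
    {n : ℕ} (c : ZMod n → V) (hc : D.IsDiCycle c)
    (h1 : ∃ i : ZMod n, c i ∈ S) (h2 : ∃ i : ZMod n, c i ∉ S) :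
    (∃ i : ZMod n, c i ∈ S ∧ ∀ y, D.Adj y (c i) → y ∈ S) ∧
      (∃ i : ZMod n, c i ∈ S ∧ ∀ y, D.Adj (c i) y → y ∈ S) := by
  obtain ⟨hn, hinj, hadj⟩ := hc
  obtain ⟨i, hi⟩ := h1
  obtain ⟨j, hj⟩ := h2
  have hplus : ∃ k : ZMod n, c k ∈ S ∧ c (k + 1) ∉ S := by
    by_contra h
    push_neg at h
    exact hj (zmod_invariant hn (fun k => c k ∈ S) h hi j)
  have hminus : ∃ k : ZMod n, c k ∉ S ∧ c (k + 1) ∈ S := by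
    by_contra h
    push_neg at h
    exact (zmod_invariant hn (fun k => c k ∉ S) h hj i) hi
  constructor
  · obtain ⟨k, hk, hk1⟩ := hplus
    refine ⟨k, hk, ?_⟩
    rcases hS _ hk with h | h
    · exact absurd (h _ (hadj k)) hk1
    · exact h
  · obtain ⟨k, hk, hk1⟩ := hminus
    refine ⟨k + 1, hk1, ?_⟩
    rcases hS _ hk1 with h | h
    · exact h
    · exact absurd (h _ (hadj k)) hk
end

section
/- Let D be a triangle-free digraph, C a (not necessarily induced) directed cycle of odd length in D, and a a vertex not on C but adjacent to some vertex of C. Then there exist three consecutive vertices b → c → d of C such that either a → b → c → d is an induced directed path on 4 vertices, or b → c → d → a is an induced directed path on 4 vertices, or a → b, b → c, c → d, d → a all hold (forming a directed 4-cycle, so a has both an out-neighbour and an in-neighbour on C). -/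
open Digr

/-- Lemma 3.4: given a triangle-free digraph, an odd directed cycle `c` and a
vertex `a` off the cycle adjacent to it, there are consecutive vertices
`b → c → d` of the cycle with `a→b→c→d` induced, or `b→c→d→a` induced, or
`a→b→c→d→a` a directed 4-cycle. -/
theorem stmt8 {V : Type} (D : Digr V) (hT : D.TriangleFree)
    {n : ℕ} (c : ZMod n → V) (hodd : Odd n) (hc : D.IsDiCycle c)
    (a : V) (ha : a ∉ Set.range c) (hadj : ∃ i : ZMod n, D.Adjd a (c i)) :
    ∃ i : ZMod n,
      D.InducedP4 a (c i) (c (i + 1)) (c (i + 2)) ∨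
      D.InducedP4 (c i) (c (i + 1)) (c (i + 2)) a ∨
      (D.Adj a (c i) ∧ D.Adj (c i) (c (i + 1)) ∧ D.Adj (c (i + 1)) (c (i + 2)) ∧
        D.Adj (c (i + 2)) a) := by
  by_contra hcon
  push_neg at hcon
  obtain ⟨hn, hinj, harc⟩ := hc
  have hNZ : NeZero n := ⟨hn.ne'⟩
  have hne1 : n ≠ 1 := by
    rintro rfl
    have h := harc 0
    rw [Subsingleton.elim ((0 : ZMod 1) + 1) 0] at h
    exact D.no_anti _ _ h h
  have h2 : (2 : ZMod n) ≠ 0 := by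
    intro h
    have hd : n ∣ 2 := by
      have : ((2 : ℕ) : ZMod n) = 0 := by exact_mod_cast h
      exact (ZMod.natCast_eq_zero_iff 2 n).mp this
    have hle : n ≤ 2 := Nat.le_of_dvd (by norm_num) hd
    interval_cases n
    · exact hne1 rfl
    · exact (Nat.not_odd_iff_even.mpr (by decide)) hodd
  have hane : ∀ j : ZMod n, a ≠ c j := fun j h => ha ⟨j, h.symm⟩
  have harc' : ∀ i : ZMod n, D.Adj (c (i + 1)) (c (i + 2)) := fun i => by
    have := harc (i + 1); rwa [show i + 1 + 1 = i + 2 by ring] at this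
  have hcne : ∀ i : ZMod n, c i ≠ c (i + 2) := fun i h => by
    have := hinj h
    exact h2 (left_eq_add.mp this)
  have hAc : ∀ i : ZMod n, ¬ D.Adjd (c i) (c (i + 2)) := fun i h =>
    hT ⟨c i, c (i + 1), c (i + 2), Or.inl (harc i), Or.inl (harc' i), h⟩
  have hA1 : ∀ i : ZMod n, D.Adjd a (c i) → ¬ D.Adjd a (c (i + 1)) := fun i h1 h2 =>
    hT ⟨a, c i, c (i + 1), h1, Or.inl (harc i), h2⟩
  -- forward propagation
  have hfwd : ∀ i : ZMod n, D.Adj a (c i) → D.Adj a (c (i + 2)) := by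
    intro i hai
    have hda : ¬ D.Adj (c (i + 2)) a := fun h =>
      (hcon i).2.2 hai (harc i) (harc' i) h
    by_contra haa2
    apply (hcon i).1
    exact ⟨hai, harc i, harc' i, hane _, hane _, hcne i,
      hA1 i (Or.inl hai), by rintro (h | h) <;> [exact haa2 h; exact hda h], hAc i⟩
  -- backward propagation
  have hbwd : ∀ i : ZMod n, D.Adj (c (i + 2)) a → D.Adj (c i) a := by
    intro i hia2
    have hna : ¬ D.Adj a (c i) := fun h =>
      (hcon i).2.2 h (harc i) (harc' i) hia2
    by_contra hnia
    apply (hcon i).2.1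
    have hmid : ¬ D.Adjd a (c (i + 1)) := fun h =>
      hA1 (i + 1) h (by rw [show i + 1 + 1 = i + 2 by ring]; exact Or.inr hia2)
    exact ⟨harc i, harc' i, hia2, hcne i, (hane i).symm, (hane (i + 1)).symm,
      hAc i, by rintro (h | h) <;> [exact hnia h; exact hna h],
      by rintro (h | h) <;> [exact hmid (Or.inr h); exact hmid (Or.inl h)]⟩
  have hF : ∀ (k : ℕ) (i : ZMod n), D.Adj a (c i) → D.Adj a (c (i + 2 * (k : ZMod n))) := by
    intro k
    induction k with
    | zero => intro i h; simpa using h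
    | succ k ih =>
      intro i h
      have := hfwd _ (ih i h)
      rwa [show i + 2 * ((k : ℕ) : ZMod n) + 2 = i + 2 * (((k : ℕ) + 1 : ℕ) : ZMod n) by
        push_cast; ring] at this
  have hB : ∀ (k : ℕ) (i : ZMod n), D.Adj (c (i + 2 * (k : ZMod n))) a → D.Adj (c i) a := by
    intro k
    induction k with
    | zero => intro i h; simpa using h
    | succ k ih =>
      intro i h
      apply ih
      apply hbwd
      rwa [show i + 2 * ((k : ℕ) : ZMod n) + 2 = i + 2 * (((k : ℕ) + 1 : ℕ) : ZMod n) by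
        push_cast; ring]
  obtain ⟨m, hm⟩ := hodd
  have hnz : ((n : ℕ) : ZMod n) = 0 := ZMod.natCast_self n
  obtain ⟨i0, hi0⟩ := hadj
  rcases hi0 with hai0 | hai0
  · have key : i0 + 2 * (((m + 1 : ℕ)) : ZMod n) = i0 + 1 := by
      have : ((2 * m + 1 : ℕ) : ZMod n) = 0 := by rw [← hm]; exact hnz
      push_cast at this ⊢
      linear_combination this
    have := hF (m + 1) i0 hai0
    rw [key] at this
    exact hA1 i0 (Or.inl hai0) (Or.inl this)
  · have key : (i0 + 1) + 2 * ((m : ℕ) : ZMod n) = i0 := by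
      have : ((2 * m + 1 : ℕ) : ZMod n) = 0 := by rw [← hm]; exact hnz
      push_cast at this ⊢
      linear_combination this
    have := hB m (i0 + 1) (by rw [key]; exact hai0)
    exact hA1 i0 (Or.inr hai0) (Or.inr this)
end

section
/- Let D be a triangle-free digraph, C an odd directed cycle in D, and a a vertex with an out-neighbour on C but no in-neighbour on C. Then there exist three consecutive vertices b → c → d of C such that a → b → c → d is an induced directed path on 4 vertices. -/
open Digr

/-- If `a` has an out-neighbour but no in-neighbour on an odd directed cycle of
a triangle-free digraph, then there are consecutive vertices `b → c → d` of the
cycle such that `a → b → c → d` is an induced directed path on 4 vertices. -/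
theorem stmt9 {V : Type} (D : Digr V) (hT : D.TriangleFree)
    {n : ℕ} (c : ZMod n → V) (hodd : Odd n) (hc : D.IsDiCycle c)
    (a : V) (hout : ∃ i : ZMod n, D.Adj a (c i))
    (hin : ∀ i : ZMod n, ¬ D.Adj (c i) a) :
    ∃ i : ZMod n, D.InducedP4 a (c i) (c (i + 1)) (c (i + 2)) := by
  obtain ⟨hn, hinj, harc⟩ := hc
  -- a is not on the cycle
  have han : ∀ j : ZMod n, a ≠ c j := by
    intro j h
    have h1 := harc (j - 1)
    rw [sub_add_cancel, ← h] at h1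
    exact hin (j - 1) h1
  -- no two consecutive out-neighbours
  have hcons : ∀ j : ZMod n, D.Adj a (c j) → ¬ D.Adj a (c (j + 1)) := by
    intro j h1 h2
    exact hT ⟨a, c j, c (j + 1), Or.inl h1, Or.inl (harc j), Or.inl h2⟩
  -- find i with a → c i but not a → c (i+2)
  have hkey : ∃ i : ZMod n, D.Adj a (c i) ∧ ¬ D.Adj a (c (i + 2)) := by
    by_contra hcon
    push_neg at hcon
    obtain ⟨i0, hi0⟩ := hout
    have hstep : ∀ k : ℕ, D.Adj a (c (i0 + (2 * k : ℕ))) := by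
      intro k
      induction k with
      | zero => simpa using hi0
      | succ k ih =>
        have := hcon _ ih
        have he : (i0 + (2 * (k + 1) : ℕ) : ZMod n) = i0 + (2 * k : ℕ) + 2 := by
          push_cast; ring
        rwa [he]
    obtain ⟨m, hm⟩ := hodd
    have h2 : ((2 * ((n + 1) / 2) : ℕ) : ZMod n) = 1 := by
      have : (n + 1) / 2 = m + 1 := by omega
      rw [this]
      have : (2 * (m + 1) : ℕ) = n + 1 := by omega
      rw [this]
      push_cast
      simp
    have := hstep ((n + 1) / 2)
    rw [h2] at this
    exact hcons i0 hi0 this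
  obtain ⟨i, hi, hi2⟩ := hkey
  have hi1 : ¬ D.Adj a (c (i + 1)) := hcons i hi
  refine ⟨i, hi, harc i, ?_, han (i + 1), han (i + 2), ?_, ?_, ?_, ?_⟩
  · have := harc (i + 1)
    rwa [show i + 1 + 1 = i + 2 by ring] at this
  · intro h
    have h1 := harc i
    have h2 := harc (i + 1)
    rw [show i + 1 + 1 = i + 2 by ring, ← h] at h2
    exact D.no_anti _ _ h1 h2
  · rintro (h | h)
    exacts [hi1 h, hin _ h]
  · rintro (h | h)
    exacts [hi2 h, hin _ h]
  · rintro (h | h)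
    · have h2 := harc (i + 1)
      rw [show i + 1 + 1 = i + 2 by ring] at h2
      exact hT ⟨c i, c (i + 1), c (i + 2), Or.inl (harc i), Or.inl h2, Or.inl h⟩
    · have h2 := harc (i + 1)
      rw [show i + 1 + 1 = i + 2 by ring] at h2
      exact hT ⟨c i, c (i + 1), c (i + 2), Or.inl (harc i), Or.inl h2, Or.inr h⟩
end

section
/- Let D be a digraph containing an odd directed cycle, and let C be an odd directed cycle of D of minimum length. Then the subdigraph induced by the vertices of C has dichromatic number at most 3. -/
open Digr

/-- The vertices of a minimum-length odd directed cycle induce a subdigraph of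
dichromatic number at most 3. -/
theorem stmt13 {V : Type} (D : Digr V) {n : ℕ} (c : ZMod n → V)
    (hodd : Odd n) (hc : D.IsDiCycle c)
    (hmin : ∀ (m : ℕ) (c' : ZMod m → V), Odd m → D.IsDiCycle c' → n ≤ m) :
    (D.induce (Set.range c)).DichromAtMost 3 := by
  classical
  obtain ⟨hn0, hinj, hadj⟩ := hc
  haveI : NeZero n := ⟨hn0.ne'⟩
  have hne1 : n ≠ 1 := by
    intro h
    subst h
    have h0 : (0 : ZMod 1) + 1 = 0 := by decide
    have h1 := hadj 0
    rw [h0] at h1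
    exact D.no_anti _ _ h1 h1
  have hn3 : 3 ≤ n := by rcases hodd with ⟨k, hk⟩; omega
  haveI : Fact (1 < n) := ⟨by omega⟩
  -- chord lemma
  have chord : ∀ i j : ZMod n, D.Adj (c i) (c j) →
      (i - j).val % 2 = 1 ∨ j = i + 1 := by
    intro i j hij
    have hne : i ≠ j := by
      rintro rfl; exact D.no_anti _ _ hij hij
    set d := (i - j).val with hd
    have hcastd : (d : ZMod n) = i - j := ZMod.natCast_rightInverse _
    have hd1 : 0 < d := ZMod.val_pos.mpr (sub_ne_zero.mpr hne)
    have hdlt : d < n := ZMod.val_lt _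
    by_cases hpar : d % 2 = 1
    · exact Or.inl hpar
    · right
      haveI : NeZero (d + 1) := ⟨Nat.succ_ne_zero d⟩
      haveI : Fact (1 < d + 1) := ⟨by omega⟩
      set c'' : ZMod (d + 1) → V := fun k => c (j + (k.val : ZMod n)) with hc''
      have hvlt : ∀ k : ZMod (d + 1), k.val < n := fun k =>
        lt_of_lt_of_le (ZMod.val_lt k) (by omega)
      have hinj'' : Function.Injective c'' := by
        intro a b hab
        have h1 : j + ((a.val : ℕ) : ZMod n) = j + ((b.val : ℕ) : ZMod n) := hinj hab
        have h2 := add_left_cancel h1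
        have h3 : a.val = b.val := by
          have h4 := congrArg ZMod.val h2
          rwa [ZMod.val_cast_of_lt (hvlt a), ZMod.val_cast_of_lt (hvlt b)] at h4
        exact ZMod.val_injective _ h3
      have harc : ∀ k : ZMod (d + 1), D.Adj (c'' k) (c'' (k + 1)) := by
        intro k
        by_cases hk : k.val + 1 < d + 1
        · have h1 : (k + 1).val = k.val + 1 := by
            rw [ZMod.val_add_of_lt (by rw [ZMod.val_one]; omega), ZMod.val_one]
          show D.Adj (c (j + ((k.val : ℕ) : ZMod n))) (c (j + (((k + 1).val : ℕ) : ZMod n)))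
          rw [h1]
          push_cast
          rw [← add_assoc]
          exact hadj _
        · have hkv : k.val = d := by have := ZMod.val_lt k; omega
          have hk1 : k + 1 = 0 := by
            have h := ZMod.natCast_rightInverse (n := d + 1) k
            rw [← h, hkv]
            exact_mod_cast ZMod.natCast_self (d + 1)
          show D.Adj (c (j + ((k.val : ℕ) : ZMod n))) (c (j + (((k + 1).val : ℕ) : ZMod n)))
          rw [hk1, hkv, ZMod.val_zero]
          have hjd : j + (d : ZMod n) = i := by rw [hcastd]; ring
          rw [hjd]
          simpa using hij
      have hcyc : D.IsDiCycle c'' := ⟨Nat.succ_pos d, hinj'', harc⟩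
      have hodd' : Odd (d + 1) := Nat.odd_iff.mpr (by omega)
      have hle := hmin (d + 1) c'' hodd' hcyc
      have hdn : d = n - 1 := by omega
      have h2 : (d : ZMod n) = -1 := by
        rw [hdn]
        refine eq_neg_of_add_eq_zero_left ?_
        have h4 : (((n - 1) + 1 : ℕ) : ZMod n) = 0 := by
          rw [show n - 1 + 1 = n from by omega, ZMod.natCast_self]
        rw [Nat.cast_add, Nat.cast_one] at h4
        exact h4
      have h3 : i - j = -1 := by rw [← hcastd, h2]
      linear_combination -h3
  -- coloring
  choose idx hidx using fun v : Set.range c => v.2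
  set f : ↥(Set.range c) → Fin 3 := fun v =>
    if (idx v).val = n - 1 then 2 else ⟨(idx v).val % 2, by omega⟩ with hf
  refine ⟨f, ?_⟩
  intro t
  rintro ⟨m, c', ⟨hm0, hinj', hadj'⟩, hmem⟩
  haveI : NeZero m := ⟨hm0.ne'⟩
  have hmem' : ∀ k : ZMod m, f (c' k) = t := hmem
  have harc' : ∀ k : ZMod m, D.Adj (c (idx (c' k))) (c (idx (c' (k + 1)))) := by
    intro k
    rw [hidx, hidx]
    exact hadj' k
  by_cases ht : t = 2
  · have hval : ∀ k : ZMod m, (idx (c' k)).val = n - 1 := by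
      intro k
      by_contra h
      have h1 := hmem' k
      rw [hf] at h1
      simp only at h1
      rw [if_neg h, ht] at h1
      have h2 := congrArg Fin.val h1
      simp at h2
      omega
    have heq : c (idx (c' (0 + 1))) = c (idx (c' 0)) := by
      congr 1
      apply ZMod.val_injective
      rw [hval, hval]
    have h0 := harc' 0
    rw [heq] at h0
    exact D.no_anti _ _ h0 h0
  · have htv : (t : ℕ) ≤ 1 := by
      have h3 := t.isLt
      have h4 : (t : ℕ) ≠ 2 := fun h => ht (Fin.ext h)
      omega
    have hval : ∀ k : ZMod m, (idx (c' k)).val ≠ n - 1 ∧ (idx (c' k)).val % 2 = (t : ℕ) := by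
      intro k
      have h1 := hmem' k
      rw [hf] at h1
      simp only at h1
      by_cases hcase : (idx (c' k)).val = n - 1
      · rw [if_pos hcase] at h1
        exact absurd h1.symm ht
      · rw [if_neg hcase] at h1
        exact ⟨hcase, congrArg Fin.val h1⟩
    have hlt : ∀ k : ZMod m, (idx (c' k)).val < (idx (c' (k + 1))).val := by
      intro k
      obtain ⟨h1, h2⟩ := hval k
      obtain ⟨h1', h2'⟩ := hval (k + 1)
      rcases chord _ _ (harc' k) with hpar | hsucc
      · set i := idx (c' k) with hi
        set j := idx (c' (k + 1)) with hj
        set d := (i - j).val with hd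
        have hdlt : d < n := ZMod.val_lt _
        have hsum : i.val = (d + j.val) % n := by
          have h := ZMod.val_add (i - j) j
          rw [show i - j + j = i from by ring] at h
          exact h
        have hiv : i.val < n := ZMod.val_lt _
        have hjv : j.val < n := ZMod.val_lt _
        rcases Nat.lt_or_ge (d + j.val) n with hlt' | hge
        · rw [Nat.mod_eq_of_lt hlt'] at hsum; omega
        · have heq : (d + j.val) % n = d + j.val - n := by
            rw [Nat.mod_eq_sub_mod hge]
            exact Nat.mod_eq_of_lt (by omega)
          rw [heq] at hsum
          omega
      · have hival : (idx (c' k)).val + 1 < n := by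
          have := ZMod.val_lt (idx (c' k)); omega
        have h5 : (idx (c' k) + 1).val = (idx (c' k)).val + 1 := by
          rw [ZMod.val_add_of_lt (by rw [ZMod.val_one]; omega), ZMod.val_one]
        rw [hsucc, h5]
        omega
    obtain ⟨b, -, hb⟩ := Finset.exists_max_image (Finset.univ : Finset (ZMod m))
      (fun k => (idx (c' k)).val) ⟨0, Finset.mem_univ 0⟩
    exact absurd (hb (b + 1) (Finset.mem_univ _)) (not_le.mpr (hlt b))
end

section
/- Let D be a triangle-free digraph with no induced directed path on 6 vertices, and let C = x_1 x_2 ... x_{2k+1} be an odd directed cycle of D. Then N^+(x_1) ∪ N^+(x_2) intersects every odd directed cycle contained in N^+(C) \ N^-(C). -/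
open Digr

lemma p6step {V : Type} (D : Digr V) (hT : D.TriangleFree)
    (hP : ¬ ∃ p : Fin 6 → V, D.InducedP6 p)
    (a b x y z w : V)
    (hab : D.Adj a b) (hbx : D.Adj b x) (hxy : D.Adj x y)
    (hyz : D.Adj y z) (hzw : D.Adj z w)
    (nya : ¬ D.Adj y a) (nza : ¬ D.Adj z a) (nwa : ¬ D.Adj w a)
    (nyb : ¬ D.Adj y b) (nzb : ¬ D.Adj z b) (nwb : ¬ D.Adj w b)
    (nyx : ¬ D.Adj y x) (nzx : ¬ D.Adj z x) (nwx : ¬ D.Adj w x)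
    (dab : a ≠ b) (dax : a ≠ x) (dbx : b ≠ x)
    (dyz : y ≠ z) (dyw : y ≠ w) (dzw : z ≠ w)
    (day : a ≠ y) (daz : a ≠ z) (daw : a ≠ w)
    (dby : b ≠ y) (dbz : b ≠ z) (dbw : b ≠ w)
    (dxy : x ≠ y) (dxz : x ≠ z) (dxw : x ≠ w) :
    D.Adj a y ∨ D.Adj a z ∨ D.Adj a w ∨ D.Adj b z ∨ D.Adj b w ∨ D.Adj x w := by
  by_contra hcon
  push_neg at hcon
  obtain ⟨h1, h2, h3, h4, h5, h6⟩ := hcon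
  have hax : ¬ D.Adjd a x := fun h => hT ⟨a, b, x, Or.inl hab, Or.inl hbx, h⟩
  have hby : ¬ D.Adjd b y := fun h => hT ⟨b, x, y, Or.inl hbx, Or.inl hxy, h⟩
  have hxz : ¬ D.Adjd x z := fun h => hT ⟨x, y, z, Or.inl hxy, Or.inl hyz, h⟩
  have hyw : ¬ D.Adjd y w := fun h => hT ⟨y, z, w, Or.inl hyz, Or.inl hzw, h⟩
  apply hP
  refine ⟨![a, b, x, y, z, w], ?_, ?_, ?_⟩
  · intro s t hst
    fin_cases s <;> fin_cases t <;>
      first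
        | rfl
        | exact absurd hst dab | exact absurd hst dax | exact absurd hst dbx
        | exact absurd hst dyz | exact absurd hst dyw | exact absurd hst dzw
        | exact absurd hst day | exact absurd hst daz | exact absurd hst daw
        | exact absurd hst dby | exact absurd hst dbz | exact absurd hst dbw
        | exact absurd hst dxy | exact absurd hst dxz | exact absurd hst dxw
        | exact absurd hst.symm dab | exact absurd hst.symm dax | exact absurd hst.symm dbx
        | exact absurd hst.symm dyz | exact absurd hst.symm dyw | exact absurd hst.symm dzw
        | exact absurd hst.symm day | exact absurd hst.symm daz | exact absurd hst.symm daw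
        | exact absurd hst.symm dby | exact absurd hst.symm dbz | exact absurd hst.symm dbw
        | exact absurd hst.symm dxy | exact absurd hst.symm dxz | exact absurd hst.symm dxw
  · intro i
    fin_cases i <;>
      first | exact hab | exact hbx | exact hxy | exact hyz | exact hzw
  · intro s t hst
    fin_cases s <;> fin_cases t <;>
      first
        | exact absurd hst (by decide)
        | exact hax | exact hby | exact hxz | exact hyw
        | exact fun h => Or.elim h h1 nya
        | exact fun h => Or.elim h h2 nza
        | exact fun h => Or.elim h h3 nwa
        | exact fun h => Or.elim h h4 nzb
        | exact fun h => Or.elim h h5 nwb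
        | exact fun h => Or.elim h h6 nwx

/-- In a triangle-free digraph with no induced `P⃗₆`, for an odd directed cycle
`c = x₁x₂…`, the set `N⁺(x₁) ∪ N⁺(x₂)` meets every odd directed cycle contained
in `N⁺(C) \\ N⁻(C)`. -/
theorem stmt14 {V : Type} (D : Digr V) (hT : D.TriangleFree)
    (hP : ¬ ∃ p : Fin 6 → V, D.InducedP6 p)
    {n : ℕ} (c : ZMod n → V) (hodd : Odd n) (hc : D.IsDiCycle c)
    {m : ℕ} (c' : ZMod m → V) (hodd' : Odd m) (hc' : D.IsDiCycle c')
    (hsub : ∀ i : ZMod m,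
      c' i ∈ D.Nout (Set.range c) \ D.Nin (Set.range c)) :
    ∃ i : ZMod m, D.Adj (c 0) (c' i) ∨ D.Adj (c 1) (c' i) := by
  classical
  by_contra hgoal
  push_neg at hgoal
  obtain ⟨hn0, hcinj, hcadj⟩ := hc
  obtain ⟨hm0, hcinj', hcadj'⟩ := hc'
  haveI : NeZero n := ⟨hn0.ne'⟩
  haveI : NeZero m := ⟨hm0.ne'⟩
  have hnotin : ∀ i : ZMod m, c' i ∉ Set.range c := fun i => (hsub i).1.1
  have hback : ∀ (i : ZMod m) (j : ZMod n), ¬ D.Adj (c' i) (c j) := by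
    intro i j hadj
    exact (hsub i).2 ⟨(hsub i).1.1, c j, ⟨j, rfl⟩, hadj⟩
  have hcross : ∀ (j : ZMod n) (i : ZMod m), c j ≠ c' i := by
    intro j i h; exact hnotin i ⟨j, h⟩
  have hn1 : n ≠ 1 := by
    rintro rfl
    have e : (0 + 1 : ZMod 1) = 0 := Subsingleton.elim _ _
    have h0 := hcadj 0
    rw [e] at h0
    exact D.no_anti _ _ h0 h0
  have hn3 : n ≠ 3 := by
    rintro rfl
    refine hT ⟨c 0, c 1, c 2, Or.inl ?_, Or.inl ?_, Or.inr ?_⟩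
    · have := hcadj 0; rwa [show (0 + 1 : ZMod 3) = 1 by decide] at this
    · have := hcadj 1; rwa [show (1 + 1 : ZMod 3) = 2 by decide] at this
    · have := hcadj 2; rwa [show (2 + 1 : ZMod 3) = 0 by decide] at this
  have hm1 : m ≠ 1 := by
    rintro rfl
    have e : (0 + 1 : ZMod 1) = 0 := Subsingleton.elim _ _
    have h0 := hcadj' 0
    rw [e] at h0
    exact D.no_anti _ _ h0 h0
  have hm3 : m ≠ 3 := by
    rintro rfl
    refine hT ⟨c' 0, c' 1, c' 2, Or.inl ?_, Or.inl ?_, Or.inr ?_⟩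
    · have := hcadj' 0; rwa [show (0 + 1 : ZMod 3) = 1 by decide] at this
    · have := hcadj' 1; rwa [show (1 + 1 : ZMod 3) = 2 by decide] at this
    · have := hcadj' 2; rwa [show (2 + 1 : ZMod 3) = 0 by decide] at this
  have hn5 : 5 ≤ n := by obtain ⟨k, hk⟩ := hodd; omega
  have hm5 : 5 ≤ m := by obtain ⟨k, hk⟩ := hodd'; omega
  have h1n : (1 : ZMod n) ≠ 0 := by
    intro h
    rw [show (1 : ZMod n) = ((1 : ℕ) : ZMod n) by norm_num] at h
    have := Nat.le_of_dvd one_pos ((ZMod.natCast_eq_zero_iff 1 n).mp h)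
    omega
  have h2n : (2 : ZMod n) ≠ 0 := by
    intro h
    rw [show (2 : ZMod n) = ((2 : ℕ) : ZMod n) by norm_num] at h
    have := Nat.le_of_dvd two_pos ((ZMod.natCast_eq_zero_iff 2 n).mp h)
    omega
  have h1m : (1 : ZMod m) ≠ 0 := by
    intro h
    rw [show (1 : ZMod m) = ((1 : ℕ) : ZMod m) by norm_num] at h
    have := Nat.le_of_dvd one_pos ((ZMod.natCast_eq_zero_iff 1 m).mp h)
    omega
  have h2m : (2 : ZMod m) ≠ 0 := by
    intro h
    rw [show (2 : ZMod m) = ((2 : ℕ) : ZMod m) by norm_num] at h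
    have := Nat.le_of_dvd two_pos ((ZMod.natCast_eq_zero_iff 2 m).mp h)
    omega
  have hzn : ∀ j : ZMod n, j - 2 ≠ j - 1 ∧ j - 2 ≠ j ∧ j - 1 ≠ j := by
    intro j
    refine ⟨fun h => h1n ?_, fun h => h2n ?_, fun h => h1n ?_⟩ <;> linear_combination -h
  have hzm : ∀ i : ZMod m, i ≠ i + 1 ∧ i ≠ i + 2 ∧ i + 1 ≠ i + 2 := by
    intro i
    refine ⟨fun h => h1m ?_, fun h => h2m ?_, fun h => h1m ?_⟩ <;> linear_combination -h
  have key : ∀ (j : ZMod n) (i : ZMod m), D.Adj (c j) (c' i) →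
      D.Adj (c (j - 2)) (c' i) ∨ D.Adj (c (j - 2)) (c' (i + 1)) ∨
        D.Adj (c (j - 2)) (c' (i + 2)) ∨ D.Adj (c (j - 1)) (c' (i + 1)) ∨
        D.Adj (c (j - 1)) (c' (i + 2)) ∨ D.Adj (c j) (c' (i + 2)) := by
    intro j i hji
    have hab : D.Adj (c (j - 2)) (c (j - 1)) := by
      have := hcadj (j - 2); rwa [show j - 2 + 1 = j - 1 by ring] at this
    have hbx : D.Adj (c (j - 1)) (c j) := by
      have := hcadj (j - 1); rwa [show j - 1 + 1 = j by ring] at this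
    have hyz := hcadj' i
    have hzw : D.Adj (c' (i + 1)) (c' (i + 2)) := by
      have := hcadj' (i + 1); rwa [show i + 1 + 1 = i + 2 by ring] at this
    exact p6step D hT hP _ _ _ _ _ _ hab hbx hji hyz hzw
      (hback _ _) (hback _ _) (hback _ _) (hback _ _) (hback _ _) (hback _ _)
      (hback _ _) (hback _ _) (hback _ _)
      (fun h => (hzn j).1 (hcinj h)) (fun h => (hzn j).2.1 (hcinj h))
      (fun h => (hzn j).2.2 (hcinj h))
      (fun h => (hzm i).1 (hcinj' h)) (fun h => (hzm i).2.1 (hcinj' h))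
      (fun h => (hzm i).2.2 (hcinj' h))
      (hcross _ _) (hcross _ _) (hcross _ _) (hcross _ _) (hcross _ _) (hcross _ _)
      (hcross _ _) (hcross _ _) (hcross _ _)
  have key2 : ∀ (j : ZMod n) (i : ZMod m), D.Adj (c j) (c' i) →
      ∃ i', D.Adj (c (j - 1)) (c' i') ∨ D.Adj (c (j - 2)) (c' i') := by
    intro j i hji
    by_cases hall : ∀ t : ℕ, D.Adj (c j) (c' (i + ((2 * t : ℕ) : ZMod m)))
    · exfalso
      have e1 : ((2 * ((m + 1) / 2) : ℕ) : ZMod m) = 1 := by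
        have h2 : 2 * ((m + 1) / 2) = m + 1 := by obtain ⟨k, hk⟩ := hodd'; omega
        rw [h2]; push_cast [ZMod.natCast_self]; ring
      have hA := hall ((m + 1) / 2)
      rw [e1] at hA
      exact hT ⟨c j, c' i, c' (i + 1), Or.inl hji, Or.inl (hcadj' i), Or.inl hA⟩
    · push_neg at hall
      have ht0 : Nat.find hall ≠ 0 := by
        intro h
        have hspec := Nat.find_spec hall
        rw [h] at hspec
        apply hspec
        simpa using hji
      have htp : D.Adj (c j) (c' (i + ((2 * (Nat.find hall - 1) : ℕ) : ZMod m))) :=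
        not_not.mp (Nat.find_min hall (by omega))
      rcases key j _ htp with h | h | h | h | h | h
      · exact ⟨_, Or.inr h⟩
      · exact ⟨_, Or.inr h⟩
      · exact ⟨_, Or.inr h⟩
      · exact ⟨_, Or.inl h⟩
      · exact ⟨_, Or.inl h⟩
      · exfalso
        apply Nat.find_spec hall
        have e : i + ((2 * (Nat.find hall - 1) : ℕ) : ZMod m) + 2
            = i + ((2 * Nat.find hall : ℕ) : ZMod m) := by
          have h2 : (2 * (Nat.find hall - 1) : ℕ) + 2 = 2 * Nat.find hall := by omega
          rw [← h2]; push_cast; ring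
        rwa [e] at h
  have hj01 : ∀ (j : ZMod n) (i : ZMod m), D.Adj (c j) (c' i) → 2 ≤ j.val := by
    intro j i h
    have hjne0 : j ≠ 0 := fun e => (hgoal i).1 (by rwa [e] at h)
    have hjne1 : j ≠ 1 := fun e => (hgoal i).2 (by rwa [e] at h)
    have h0 : j.val ≠ 0 := fun e => hjne0 ((ZMod.val_eq_zero j).mp e)
    have h1 : j.val ≠ 1 := by
      intro e
      apply hjne1
      have hv := ZMod.natCast_zmod_val j
      rw [e] at hv
      rw [← hv]; norm_num
    omega
  have hval : ∀ j : ZMod n, 2 ≤ j.val → (j - 1).val = j.val - 1 ∧ (j - 2).val = j.val - 2 := by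
    intro j hj
    have hlt : j.val < n := ZMod.val_lt j
    have hj1 : j - 1 = ((j.val - 1 : ℕ) : ZMod n) := by
      rw [Nat.cast_sub (by omega), ZMod.natCast_zmod_val j]; norm_num
    have hj2 : j - 2 = ((j.val - 2 : ℕ) : ZMod n) := by
      rw [Nat.cast_sub (by omega), ZMod.natCast_zmod_val j]; norm_num
    constructor
    · rw [hj1, ZMod.val_cast_of_lt (by omega)]
    · rw [hj2, ZMod.val_cast_of_lt (by omega)]
  have desc : ∀ v : ℕ, ∀ (j : ZMod n) (i : ZMod m), j.val ≤ v → ¬ D.Adj (c j) (c' i) := by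
    intro v
    induction v using Nat.strong_induction_on with
    | _ v ih =>
      intro j i hjv hadj
      have hj2 := hj01 j i hadj
      obtain ⟨e1, e2⟩ := hval j hj2
      obtain ⟨i', h'⟩ := key2 j i hadj
      rcases h' with h | h
      · exact ih (v - 1) (by omega) (j - 1) i' (by omega) h
      · exact ih (v - 1) (by omega) (j - 2) i' (by omega) h
  obtain ⟨-, x, ⟨j, rfl⟩, hadj⟩ := (hsub 0).1
  exact desc j.val j 0 le_rfl hadj
end

section
/- Let D be a triangle-free digraph with no induced directed path on 6 vertices, and let C be an odd directed cycle of D. Define the second-level sets N_2^+(C) and N_2^-(C) by the iterated neighbourhood construction. Then the subdigraph induced by N_2^+(C) \ N_2^-(C) contains no odd directed cycle, and hence has dichromatic number at most 2. -/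
open Digr


namespace Stmt16

variable {V : Type}

lemma adjd_symm {D : Digr V} {a b : V} (h : D.Adjd a b) : D.Adjd b a := h.elim Or.inr Or.inl

lemma tri3 {D : Digr V} (hT : D.TriangleFree) {a b c : V}
    (h1 : D.Adjd a b) (h2 : D.Adjd b c) : ¬ D.Adjd a c := fun h3 => hT ⟨a, b, c, h1, h2, h3⟩

lemma adj_ne {D : Digr V} {a b : V} (h : D.Adj a b) : a ≠ b := by
  rintro rfl; exact D.no_anti a a h h

lemma no_p6 {D : Digr V} (hP : ¬ ∃ p : Fin 6 → V, D.InducedP6 p)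
    {a b c d e f : V}
    (h1 : D.Adj a b) (h2 : D.Adj b c) (h3 : D.Adj c d) (h4 : D.Adj d e) (h5 : D.Adj e f)
    (nac : ¬ D.Adjd a c) (nad : ¬ D.Adjd a d) (nae : ¬ D.Adjd a e) (naf : ¬ D.Adjd a f)
    (nbd : ¬ D.Adjd b d) (nbe : ¬ D.Adjd b e) (nbf : ¬ D.Adjd b f)
    (nce : ¬ D.Adjd c e) (ncf : ¬ D.Adjd c f) (ndf : ¬ D.Adjd d f)
    (dac : a ≠ c) (dad : a ≠ d) (dae : a ≠ e) (daf : a ≠ f)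
    (dbd : b ≠ d) (dbe : b ≠ e) (dbf : b ≠ f)
    (dce : c ≠ e) (dcf : c ≠ f) (ddf : d ≠ f) : False := by
  have dab := adj_ne h1
  have dbc := adj_ne h2
  have dcd := adj_ne h3
  have dde := adj_ne h4
  have def' := adj_ne h5
  apply hP
  refine ⟨![a, b, c, d, e, f], ?_, ?_, ?_⟩
  · intro i j hij
    fin_cases i <;> fin_cases j <;>
      first
        | rfl
        | exact absurd hij dab | exact absurd hij (Ne.symm dab)
        | exact absurd hij dbc | exact absurd hij (Ne.symm dbc)
        | exact absurd hij dcd | exact absurd hij (Ne.symm dcd)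
        | exact absurd hij dde | exact absurd hij (Ne.symm dde)
        | exact absurd hij def' | exact absurd hij (Ne.symm def')
        | exact absurd hij dac | exact absurd hij (Ne.symm dac)
        | exact absurd hij dad | exact absurd hij (Ne.symm dad)
        | exact absurd hij dae | exact absurd hij (Ne.symm dae)
        | exact absurd hij daf | exact absurd hij (Ne.symm daf)
        | exact absurd hij dbd | exact absurd hij (Ne.symm dbd)
        | exact absurd hij dbe | exact absurd hij (Ne.symm dbe)
        | exact absurd hij dbf | exact absurd hij (Ne.symm dbf)
        | exact absurd hij dce | exact absurd hij (Ne.symm dce)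
        | exact absurd hij dcf | exact absurd hij (Ne.symm dcf)
        | exact absurd hij ddf | exact absurd hij (Ne.symm ddf)
  · intro i
    fin_cases i
    · exact h1
    · exact h2
    · exact h3
    · exact h4
    · exact h5
  · intro i j hij
    fin_cases i <;> fin_cases j <;>
      first
        | exact absurd hij (by decide)
        | exact nac | exact nad | exact nae | exact naf
        | exact nbd | exact nbe | exact nbf
        | exact nce | exact ncf | exact ndf

lemma half_key {m : ℕ} (h : Odd m) : ((2 * ((m + 1) / 2) : ℕ) : ZMod m) = 1 := by
  have h2 : 2 * ((m + 1) / 2) = m + 1 := by obtain ⟨k, rfl⟩ := h; omega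
  rw [h2]; push_cast [ZMod.natCast_self]; ring

lemma cyc_one_ne {m : ℕ} {D : Digr V} {c : ZMod m → V} (hc : D.IsDiCycle c) :
    (1 : ZMod m) ≠ 0 := by
  intro h
  have := hc.2.2 0
  rw [show (0 : ZMod m) + 1 = 0 by rw [h]; ring] at this
  exact D.no_anti _ _ this this

lemma cyc_two_ne {m : ℕ} {D : Digr V} {c : ZMod m → V} (hc : D.IsDiCycle c) (hodd : Odd m) :
    (2 : ZMod m) ≠ 0 := by
  intro h
  haveI : NeZero m := ⟨hc.1.ne'⟩
  have hdvd : m ∣ 2 := by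
    have := (ZMod.natCast_eq_zero_iff 2 m).mp (by exact_mod_cast h)
    exact this
  have hle : m ≤ 2 := Nat.le_of_dvd (by norm_num) hdvd
  have hpos : 0 < m := hc.1
  interval_cases m
  · exact cyc_one_ne hc (by decide)
  · exact (by decide : ¬ Odd 2) hodd

lemma NlevP_two (D : Digr V) (X : Set V) :
    D.NlevP X 2 = D.Nout (D.Nout X \ X) \ (X ∪ (D.Nout X \ X) ∪ (D.Nin X \ X)) := rfl

lemma NlevM_two (D : Digr V) (X : Set V) :
    D.NlevM X 2 = D.Nin (D.Nin X \ X) \ (X ∪ (D.Nout X \ X) ∪ (D.Nin X \ X)) := rfl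

lemma conj1 {V : Type} (D : Digr V) (hT : D.TriangleFree)
    (hP : ¬ ∃ p : Fin 6 → V, D.InducedP6 p)
    {n : ℕ} (c : ZMod n → V) (hodd : Odd n) (hc : D.IsDiCycle c) :
    ¬ ∃ (m : ℕ) (c' : ZMod m → V), Odd m ∧ D.IsDiCycle c' ∧
        ∀ i : ZMod m, c' i ∈ D.NlevP (Set.range c) 2 \ D.NlevM (Set.range c) 2 := by
  rintro ⟨m, x, hmodd, hx, hmem⟩
  classical
  set X := Set.range c with hX
  have hcadj : ∀ i : ZMod n, D.Adj (c i) (c (i+1)) := hc.2.2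
  have hxadj : ∀ i : ZMod m, D.Adj (x i) (x (i+1)) := hx.2.2
  have n2 : (2 : ZMod n) ≠ 0 := cyc_two_ne hc hodd
  have m2 : (2 : ZMod m) ≠ 0 := cyc_two_ne hx hmodd
  have hmemP : ∀ i, x i ∈ D.Nout (D.Nout X \ X) \ (X ∪ (D.Nout X \ X) ∪ (D.Nin X \ X)) :=
    fun i => by have h := (hmem i).1; rwa [NlevP_two] at h
  have hmemM : ∀ i, x i ∉ D.NlevM X 2 := fun i => (hmem i).2
  have hnX : ∀ i, x i ∉ X := fun i h => (hmemP i).2 (Or.inl (Or.inl h))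
  have hnadj : ∀ (i : ZMod m) (v : V), v ∈ X → ¬ D.Adjd (x i) v := by
    intro i v hv hadj
    rcases hadj with h | h
    · exact (hmemP i).2 (Or.inr ⟨⟨hnX i, v, hv, h⟩, hnX i⟩)
    · exact (hmemP i).2 (Or.inl (Or.inr ⟨⟨hnX i, v, hv, h⟩, hnX i⟩))
  have hwit : ∀ i : ZMod m, ∃ u, u ∉ X ∧ (∃ v ∈ X, D.Adj v u) ∧ D.Adj u (x i) := by
    intro i
    obtain ⟨-, u, hu, hadj⟩ := (hmemP i).1
    exact ⟨u, hu.1.1, hu.1.2, hadj⟩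
  have hnoout : ∀ (i : ZMod m) (u : V), u ∉ X → (∃ w ∈ X, D.Adj u w) → ¬ D.Adj (x i) u := by
    intro i u huX hw hadj
    apply hmemM i
    rw [NlevM_two]
    exact ⟨⟨fun hmem' => (hmemP i).2 (Or.inr hmem'), u, ⟨⟨huX, hw⟩, huX⟩, hadj⟩, (hmemP i).2⟩
  -- Key P6 lemma I
  have keyI : ∀ (w : V) (t : ZMod m), w ∉ X → (∃ v' ∈ X, D.Adj v' w) → D.Adj w (x t) →
      D.Adjd w (x (t + 2)) := by
    rintro w t hwX ⟨v', hv'X, hv'w⟩ hwt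
    obtain ⟨j, hj⟩ := hv'X
    by_contra hne
    have harc1 : D.Adj (c (j - 1)) (c j) := by
      have h' := hcadj (j - 1); rw [show j - 1 + 1 = j by ring] at h'; exact h'
    have harc2 : D.Adj (c j) w := by rwa [hj]
    have harc4 : D.Adj (x t) (x (t+1)) := hxadj t
    have harc5 : D.Adj (x (t+1)) (x (t+2)) := by
      have h' := hxadj (t+1); rw [show t + 1 + 1 = t + 2 by ring] at h'; exact h'
    exact no_p6 hP harc1 harc2 hwt harc4 harc5
      (tri3 hT (Or.inl harc1) (Or.inl harc2))
      (fun h => hnadj t _ ⟨j - 1, rfl⟩ (adjd_symm h))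
      (fun h => hnadj (t+1) _ ⟨j - 1, rfl⟩ (adjd_symm h))
      (fun h => hnadj (t+2) _ ⟨j - 1, rfl⟩ (adjd_symm h))
      (fun h => hnadj t _ ⟨j, rfl⟩ (adjd_symm h))
      (fun h => hnadj (t+1) _ ⟨j, rfl⟩ (adjd_symm h))
      (fun h => hnadj (t+2) _ ⟨j, rfl⟩ (adjd_symm h))
      (tri3 hT (Or.inl hwt) (Or.inl harc4))
      hne
      (tri3 hT (Or.inl harc4) (Or.inl harc5))
      (fun h => hwX (h ▸ Set.mem_range_self (j - 1)))
      (fun h => hnX t (h ▸ Set.mem_range_self (j - 1)))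
      (fun h => hnX (t+1) (h ▸ Set.mem_range_self (j - 1)))
      (fun h => hnX (t+2) (h ▸ Set.mem_range_self (j - 1)))
      (fun h => hnX t (h ▸ Set.mem_range_self j))
      (fun h => hnX (t+1) (h ▸ Set.mem_range_self j))
      (fun h => hnX (t+2) (h ▸ Set.mem_range_self j))
      (fun h => hnadj (t+1) (c j) ⟨j, rfl⟩ (Or.inr (h ▸ harc2)))
      (fun h => hnadj (t+2) (c j) ⟨j, rfl⟩ (Or.inr (h ▸ harc2)))
      (fun h => m2 (left_eq_add.mp (hx.2.1 h)))
  -- Key P6 lemma II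
  have keyII : ∀ (w : V) (t : ZMod m) (j : ZMod n), w ∉ X → D.Adj (c j) w → D.Adj w (x t) →
      D.Adjd w (c (j - 2)) := by
    intro w t j hwX hjw hwt
    by_contra hne
    have harc0 : D.Adj (c (j - 2)) (c (j - 1)) := by
      have h' := hcadj (j - 2); rw [show j - 2 + 1 = j - 1 by ring] at h'; exact h'
    have harc1 : D.Adj (c (j - 1)) (c j) := by
      have h' := hcadj (j - 1); rw [show j - 1 + 1 = j by ring] at h'; exact h'
    have harc4 : D.Adj (x t) (x (t+1)) := hxadj t
    exact no_p6 hP harc0 harc1 hjw hwt harc4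
      (tri3 hT (Or.inl harc0) (Or.inl harc1))
      (fun h => hne (adjd_symm h))
      (fun h => hnadj t _ ⟨j - 2, rfl⟩ (adjd_symm h))
      (fun h => hnadj (t+1) _ ⟨j - 2, rfl⟩ (adjd_symm h))
      (tri3 hT (Or.inl harc1) (Or.inl hjw))
      (fun h => hnadj t _ ⟨j - 1, rfl⟩ (adjd_symm h))
      (fun h => hnadj (t+1) _ ⟨j - 1, rfl⟩ (adjd_symm h))
      (fun h => hnadj t _ ⟨j, rfl⟩ (adjd_symm h))
      (fun h => hnadj (t+1) _ ⟨j, rfl⟩ (adjd_symm h))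
      (tri3 hT (Or.inl hwt) (Or.inl harc4))
      (fun h => n2 (sub_eq_self.mp (hc.2.1 h)))
      (fun h => hwX (h ▸ Set.mem_range_self (j - 2)))
      (fun h => hnX t (h ▸ Set.mem_range_self (j - 2)))
      (fun h => hnX (t+1) (h ▸ Set.mem_range_self (j - 2)))
      (fun h => hwX (h ▸ Set.mem_range_self (j - 1)))
      (fun h => hnX t (h ▸ Set.mem_range_self (j - 1)))
      (fun h => hnX (t+1) (h ▸ Set.mem_range_self (j - 1)))
      (fun h => hnX t (h ▸ Set.mem_range_self j))
      (fun h => hnX (t+1) (h ▸ Set.mem_range_self j))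
      (fun h => hnadj (t+1) (c j) ⟨j, rfl⟩ (Or.inr (h ▸ hjw)))
  -- pick a witness for x 0
  obtain ⟨u, huX, hvex, hu0⟩ := hwit 0
  obtain ⟨v, hvX, hvu⟩ := hvex
  obtain ⟨i0, hi0⟩ := hvX
  -- Step 1: find t with u → x t and ¬ u → x (t+2)
  have hQex : ∃ k : ℕ, ¬ D.Adj u (x ((2 * k : ℕ) : ZMod m)) := by
    by_contra hall
    push_neg at hall
    have h1' : D.Adj u (x 1) := by
      have h' := hall ((m + 1) / 2)
      rwa [half_key hmodd] at h'
    have harc : D.Adj (x 0) (x 1) := by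
      have h' := hxadj 0; rw [zero_add] at h'; exact h'
    exact tri3 hT (Or.inl hu0) (Or.inl harc) (Or.inl h1')
  set k1 := Nat.find hQex with hk1def
  have hk1 : ¬ D.Adj u (x ((2 * k1 : ℕ) : ZMod m)) := Nat.find_spec hQex
  have hk1pos : k1 ≠ 0 := by
    intro h
    apply hk1
    rw [h]
    simpa using hu0
  have hQprev : D.Adj u (x ((2 * (k1 - 1) : ℕ) : ZMod m)) := by
    by_contra h
    exact Nat.find_min hQex (show k1 - 1 < k1 by omega) h
  set t := ((2 * (k1 - 1) : ℕ) : ZMod m) with ht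
  have ht2 : t + 2 = ((2 * k1 : ℕ) : ZMod m) := by
    rw [ht]
    have h12 : 2 * (k1 - 1) + 2 = 2 * k1 := by omega
    rw [← h12]
    push_cast
    ring
  have hback : D.Adj (x (t + 2)) u := by
    rcases keyI u t huX ⟨v, ⟨i0, hi0⟩, hvu⟩ hQprev with h | h
    · rw [ht2] at h; exact absurd h hk1
    · exact h
  -- Step 2: walk backwards around C
  have hvu' : D.Adj (c i0) u := by rwa [hi0]
  have hstep : ∀ k : ℕ, D.Adj (c (i0 - ((2 * k : ℕ) : ZMod n))) u := by
    intro k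
    induction k with
    | zero => simpa using hvu'
    | succ k ih =>
      rcases keyII u t (i0 - ((2 * k : ℕ) : ZMod n)) huX ih hQprev with h | h
      · exact absurd hback (hnoout (t + 2) u huX ⟨_, ⟨_, rfl⟩, h⟩)
      · have heq : i0 - ((2 * k : ℕ) : ZMod n) - 2 = i0 - ((2 * (k+1) : ℕ) : ZMod n) := by
          push_cast; ring
        rwa [heq] at h
  have hfin : D.Adj (c (i0 - 1)) u := by
    have h' := hstep ((n + 1) / 2)
    rwa [half_key hodd] at h'
  have harc : D.Adj (c (i0 - 1)) (c i0) := by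
    have h' := hcadj (i0 - 1); rw [show i0 - 1 + 1 = i0 by ring] at h'; exact h'
  exact tri3 hT (Or.inl harc) (Or.inl hvu') (Or.inl hfin)

/-- A directed walk of length `k` from `a` to `b`. -/
def Wk {W : Type} (H : Digr W) (a b : W) (k : ℕ) : Prop :=
  ∃ f : ℕ → W, f 0 = a ∧ f k = b ∧ ∀ i < k, H.Adj (f i) (f (i+1))

lemma wk_refl {W : Type} (H : Digr W) (a : W) : Wk H a a 0 :=
  ⟨fun _ => a, rfl, rfl, fun i hi => absurd hi (by omega)⟩

lemma wk_single {W : Type} {H : Digr W} {a b : W} (h : H.Adj a b) : Wk H a b 1 :=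
  ⟨fun i => if i = 0 then a else b, by simp, by simp, by
    intro i hi
    have : i = 0 := by omega
    subst this; simpa using h⟩

lemma wk_trans {W : Type} {H : Digr W} {a b c : W} {k l : ℕ}
    (h1 : Wk H a b k) (h2 : Wk H b c l) : Wk H a c (k + l) := by
  obtain ⟨f, hf0, hfk, hfadj⟩ := h1
  obtain ⟨g, hg0, hgl, hgadj⟩ := h2
  refine ⟨fun i => if i ≤ k then f i else g (i - k), by simp [hf0], ?_, ?_⟩
  · show (if k + l ≤ k then f (k + l) else g (k + l - k)) = c
    by_cases hl : l = 0
    · subst hl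
      rw [if_pos (by omega), Nat.add_zero, hfk, ← hg0]
      exact hgl
    · rw [if_neg (by omega), show k + l - k = l by omega, hgl]
  · intro i hi
    show H.Adj (if i ≤ k then f i else g (i - k)) (if i + 1 ≤ k then f (i + 1) else g (i + 1 - k))
    by_cases h1' : i + 1 ≤ k
    · rw [if_pos (by omega : i ≤ k), if_pos h1']
      exact hfadj i (by omega)
    · by_cases h2' : i ≤ k
      · have hik : i = k := by omega
        subst hik
        rw [if_pos (le_refl _), if_neg h1', hfk, ← hg0, show i + 1 - i = 1 by omega]
        exact hgadj 0 (by omega)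
      · rw [if_neg h2', if_neg h1', show i + 1 - k = (i - k) + 1 by omega]
        exact hgadj (i - k) (by omega)

lemma zmod_cast_val {L : ℕ} [NeZero L] (a : ZMod L) : ((a.val : ℕ) : ZMod L) = a := by
  rw [ZMod.natCast_val, ZMod.cast_id]

lemma wk_cycle {W : Type} {H : Digr W} {m : ℕ} {c : ZMod m → W} (hc : H.IsDiCycle c)
    (i j : ZMod m) : Wk H (c i) (c j) ((j - i).val) := by
  haveI : NeZero m := ⟨hc.1.ne'⟩
  refine ⟨fun l => c (i + (l : ZMod m)), by simp, ?_, ?_⟩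
  · show c (i + (((j - i).val : ℕ) : ZMod m)) = c j
    rw [zmod_cast_val, add_sub_cancel]
  · intro l hl
    show H.Adj (c (i + (l : ZMod m))) (c (i + ((l + 1 : ℕ) : ZMod m)))
    have he : ((l + 1 : ℕ) : ZMod m) = (l : ZMod m) + 1 := by push_cast; ring
    rw [he, ← add_assoc]
    exact hc.2.2 (i + l)

lemma no_odd_closed {W : Type} {H : Digr W}
    (hno : ∀ (m : ℕ) (c' : ZMod m → W), Odd m → ¬ H.IsDiCycle c') :
    ∀ (a : W) (k : ℕ), Odd k → ¬ Wk H a a k := by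
  by_contra hcon
  push_neg at hcon
  obtain ⟨a₀, k₀, hk₀odd, hk₀⟩ := hcon
  classical
  have hex : ∃ L, Odd L ∧ ∃ a, Wk H a a L := ⟨k₀, hk₀odd, a₀, hk₀⟩
  set L := Nat.find hex with hLdef
  obtain ⟨hLodd, a, f, hf0, hfL, hadj⟩ := Nat.find_spec hex
  rw [← hLdef] at hLodd hfL hadj
  clear_value L
  have hLpos : 0 < L := hLodd.pos
  by_cases hrep : ∃ i j, i < j ∧ j ≤ L ∧ ¬(i = 0 ∧ j = L) ∧ f i = f j
  · obtain ⟨i, j, hij, hjL, hnotfull, hfij⟩ := hrep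
    have hw1 : Wk H (f i) (f i) (j - i) := by
      refine ⟨fun l => f (i + l), by simp, ?_, ?_⟩
      · show f (i + (j - i)) = f i
        rw [show i + (j - i) = j by omega, ← hfij]
      · intro l hl
        show H.Adj (f (i + l)) (f (i + (l + 1)))
        rw [show i + (l + 1) = (i + l) + 1 by omega]
        exact hadj (i + l) (by omega)
    have hw2 : Wk H (f j) (f j) ((L - j) + i) := by
      refine ⟨fun l => if l ≤ L - j then f (j + l) else f (l - (L - j)), by simp, ?_, ?_⟩
      · show (if (L - j) + i ≤ L - j then f (j + ((L - j) + i)) else f ((L - j) + i - (L - j))) = f j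
        by_cases hi0 : i = 0
        · subst hi0
          rw [if_pos (by omega), show j + (L - j + 0) = L by omega, hfL, ← hf0]
          exact hfij
        · rw [if_neg (by omega), show L - j + i - (L - j) = i by omega]
          exact hfij
      · intro l hl
        show H.Adj (if l ≤ L - j then f (j + l) else f (l - (L - j)))
          (if l + 1 ≤ L - j then f (j + (l + 1)) else f (l + 1 - (L - j)))
        by_cases hA : l + 1 ≤ L - j
        · rw [if_pos (by omega), if_pos hA, show j + (l + 1) = (j + l) + 1 by omega]
          exact hadj (j + l) (by omega)
        · by_cases hB : l ≤ L - j
          · rw [if_pos hB, if_neg hA, show j + l = L by omega,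
              show l + 1 - (L - j) = 1 by omega, hfL, ← hf0]
            exact hadj 0 (by omega)
          · rw [if_neg hB, if_neg hA, show l + 1 - (L - j) = (l - (L - j)) + 1 by omega]
            exact hadj (l - (L - j)) (by omega)
    have hcase : i ≠ 0 ∨ j ≠ L := by tauto
    have hlt1 : j - i < L := by rcases hcase with h | h <;> omega
    have hlt2 : (L - j) + i < L := by omega
    rcases Nat.even_or_odd (j - i) with he | ho
    · have ho2 : Odd ((L - j) + i) := by
        rw [Nat.odd_iff] at hLodd ⊢
        rw [Nat.even_iff] at he
        omega
      exact Nat.find_min hex (hLdef ▸ hlt2) ⟨ho2, f j, hw2⟩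
    · exact Nat.find_min hex (hLdef ▸ hlt1) ⟨ho, f i, hw1⟩
  · push_neg at hrep
    haveI : NeZero L := ⟨hLpos.ne'⟩
    have hcyc : H.IsDiCycle (fun i : ZMod L => f i.val) := by
      refine ⟨hLpos, ?_, ?_⟩
      · intro i j hgij
        simp only at hgij
        by_contra hne
        have hvi := ZMod.val_lt i
        have hvj := ZMod.val_lt j
        have hvne : i.val ≠ j.val := fun h => hne (ZMod.val_injective L h)
        rcases Nat.lt_or_ge i.val j.val with hlt | hge
        · exact hrep i.val j.val hlt (by omega) (fun h => by omega) hgij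
        · exact hrep j.val i.val (by omega) (by omega) (fun h => by omega) hgij.symm
      · intro i
        show H.Adj (f i.val) (f ((i + 1).val))
        have hvi := ZMod.val_lt i
        have hcast : i + 1 = ((i.val + 1 : ℕ) : ZMod L) := by
          rw [Nat.cast_add, Nat.cast_one, zmod_cast_val]
        by_cases hend : i.val + 1 = L
        · have hval : (i + 1).val = 0 := by
            rw [hcast, hend, ZMod.natCast_self, ZMod.val_zero]
          rw [hval, hf0, ← hfL]
          show H.Adj (f i.val) (f L)
          have h2 : f L = f (i.val + 1) := by rw [hend]
          rw [h2]
          exact hadj i.val (by omega)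
        · have hval : (i + 1).val = i.val + 1 := by
            rw [hcast, ZMod.val_cast_of_lt (by omega)]
          rw [hval]
          exact hadj i.val (by omega)
    exact hno L (fun i : ZMod L => f i.val) hLodd hcyc

lemma wk_parity {W : Type} {H : Digr W}
    (hcl : ∀ (a : W) (k : ℕ), Odd k → ¬ Wk H a a k)
    {ρ x : W} {p q s : ℕ} (hp : Wk H ρ x p) (hq : Wk H ρ x q) (hs : Wk H x ρ s) :
    (Odd p ↔ Odd q) := by
  have h1 : ¬ Odd (p + s) := fun h => hcl ρ _ h (wk_trans hp hs)
  have h2 : ¬ Odd (q + s) := fun h => hcl ρ _ h (wk_trans hq hs)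
  rw [Nat.odd_iff] at h1 h2 ⊢
  rw [Nat.odd_iff]
  omega

lemma two_color {W : Type} (H : Digr W)
    (hno : ∀ (m : ℕ) (c' : ZMod m → W), Odd m → ¬ H.IsDiCycle c') :
    H.DichromAtMost 2 := by
  classical
  have hcl := no_odd_closed hno
  let r : W → W → Prop := fun a b => (∃ k, Wk H a b k) ∧ (∃ k, Wk H b a k)
  have requiv : Equivalence r := by
    refine ⟨fun a => ⟨⟨0, wk_refl H a⟩, ⟨0, wk_refl H a⟩⟩, fun h => ⟨h.2, h.1⟩, ?_⟩
    rintro a b c ⟨⟨k1, h1⟩, ⟨k2, h2⟩⟩ ⟨⟨k3, h3⟩, ⟨k4, h4⟩⟩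
    exact ⟨⟨k1 + k3, wk_trans h1 h3⟩, ⟨k4 + k2, wk_trans h4 h2⟩⟩
  let sd : Setoid W := ⟨r, requiv⟩
  let rep : W → W := fun a => (Quotient.mk sd a).out
  have hrep : ∀ a, r (rep a) a := fun a => Quotient.exact (Quotient.out_eq (Quotient.mk sd a))
  refine ⟨fun a => if ∃ k, Odd k ∧ Wk H (rep a) a k then 1 else 0, ?_⟩
  intro col
  rintro ⟨m, x, hcyc, hmemcol⟩
  haveI : NeZero m := ⟨hcyc.1.ne'⟩
  have hwalk : ∀ i j : ZMod m, Wk H (x i) (x j) ((j - i).val) := wk_cycle hcyc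
  obtain ⟨⟨p, hp⟩, ⟨s0, hs0⟩⟩ := hrep (x 0)
  have hrepeq : rep (x 1) = rep (x 0) := by
    have heq : Quotient.mk sd (x 1) = Quotient.mk sd (x 0) :=
      Quotient.sound ⟨⟨_, hwalk 1 0⟩, ⟨_, hwalk 0 1⟩⟩
    show (Quotient.mk sd (x 1)).out = (Quotient.mk sd (x 0)).out
    rw [heq]
  have harc01 : H.Adj (x 0) (x 1) := by
    have h' := hcyc.2.2 0; rw [zero_add] at h'; exact h'
  have hp1 : Wk H (rep (x 0)) (x 1) (p + 1) := wk_trans hp (wk_single harc01)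
  have hret1 : Wk H (x 1) (rep (x 0)) ((((0 : ZMod m) - 1).val) + s0) :=
    wk_trans (hwalk 1 0) hs0
  have hcol0 := hmemcol 0
  have hcol1 := hmemcol 1
  simp only [Set.mem_setOf_eq] at hcol0 hcol1
  by_cases hoddp : Odd p
  · have h0 : (if ∃ k, Odd k ∧ Wk H (rep (x 0)) (x 0) k then (1 : Fin 2) else 0) = 1 :=
      if_pos ⟨p, hoddp, hp⟩
    have h1 : (if ∃ k, Odd k ∧ Wk H (rep (x 1)) (x 1) k then (1 : Fin 2) else 0) = 0 := by
      rw [hrepeq]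
      apply if_neg
      rintro ⟨k, hkodd, hkw⟩
      have hpar := (wk_parity hcl hkw hp1 hret1).mp hkodd
      rw [Nat.odd_iff] at hpar hoddp
      omega
    rw [h0] at hcol0
    rw [h1] at hcol1
    have : (1 : Fin 2) = 0 := hcol0.trans hcol1.symm
    exact absurd this (by decide)
  · have h0 : (if ∃ k, Odd k ∧ Wk H (rep (x 0)) (x 0) k then (1 : Fin 2) else 0) = 0 := by
      apply if_neg
      rintro ⟨k, hkodd, hkw⟩
      exact hoddp ((wk_parity hcl hkw hp hs0).mp hkodd)
    have hoddp1 : Odd (p + 1) := by rw [Nat.odd_iff] at hoddp ⊢; omega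
    have h1 : (if ∃ k, Odd k ∧ Wk H (rep (x 1)) (x 1) k then (1 : Fin 2) else 0) = 1 := by
      rw [hrepeq]
      exact if_pos ⟨p + 1, hoddp1, hp1⟩
    rw [h0] at hcol0
    rw [h1] at hcol1
    have : (0 : Fin 2) = 1 := hcol0.trans hcol1.symm
    exact absurd this (by decide)

end Stmt16

/-- In a triangle-free digraph with no induced `P⃗₆` and an odd directed cycle
`c`, the set `N₂⁺(C) \\ N₂⁻(C)` contains no odd directed cycle, and hence
induces a subdigraph of dichromatic number at most 2. -/
theorem stmt16 {V : Type} (D : Digr V) (hT : D.TriangleFree)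
    (hP : ¬ ∃ p : Fin 6 → V, D.InducedP6 p)
    {n : ℕ} (c : ZMod n → V) (hodd : Odd n) (hc : D.IsDiCycle c) :
    (¬ ∃ (m : ℕ) (c' : ZMod m → V), Odd m ∧ D.IsDiCycle c' ∧
        ∀ i : ZMod m, c' i ∈ D.NlevP (Set.range c) 2 \ D.NlevM (Set.range c) 2) ∧
      (D.induce
        (D.NlevP (Set.range c) 2 \ D.NlevM (Set.range c) 2)).DichromAtMost 2 := by
  constructor
  · exact Stmt16.conj1 D hT hP c hodd hc
  · apply Stmt16.two_color
    intro m x' hmodd hcyc'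
    apply Stmt16.conj1 D hT hP c hodd hc
    refine ⟨m, fun i => (x' i).1, hmodd,
      ⟨hcyc'.1, fun i j h => hcyc'.2.1 (Subtype.val_injective h), fun i => hcyc'.2.2 i⟩,
      fun i => (x' i).2⟩
end

section
/- Let D be a triangle-free digraph with no induced directed path on 6 vertices, and let C be an odd directed cycle of D of minimum length. Then the subdigraph induced by N^+(C) ∩ N^-(C) has dichromatic number at most 30. -/
open Digr

lemma cycOne {V : Type} (D : Digr V) {n : ℕ} [NeZero n] (c : ZMod n → V)
    (hcinj : Function.Injective c) (hcadj : ∀ i, D.Adj (c i) (c (i+1)))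
    {v : V} (hv : v ∉ Set.range c) {i j : ZMod n} (hi : D.Adj (c i) v) (hj : D.Adj v (c j)) :
    D.IsDiCycle (n := (i - j).val + 2)
      (fun t => if t.val = 0 then v else c (j + ((t.val - 1 : ℕ) : ZMod n))) := by
  have hen : (i - j).val < n := ZMod.val_lt _
  set e := (i - j).val with he
  set L := e + 2 with hL
  haveI : NeZero L := ⟨by omega⟩
  have hcast : ∀ s : ℕ, s ≤ e → (((s : ℕ) : ZMod n)).val = s := by
    intro s hs
    exact ZMod.val_cast_of_lt (by omega)
  refine ⟨by omega, ?_, ?_⟩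
  · intro t t' h
    simp only at h
    have ht : t.val < L := ZMod.val_lt t
    have ht' : t'.val < L := ZMod.val_lt t'
    by_cases h0 : t.val = 0 <;> by_cases h0' : t'.val = 0
    · exact ZMod.val_injective L (by omega)
    · rw [if_pos h0, if_neg h0'] at h
      exact absurd ⟨_, h.symm⟩ hv
    · rw [if_neg h0, if_pos h0'] at h
      exact absurd ⟨_, h⟩ hv
    · rw [if_neg h0, if_neg h0'] at h
      have h2 := congrArg (f := fun x : ZMod n => x - j) (hcinj h)
      simp only [add_sub_cancel_left] at h2
      have h3 := congrArg ZMod.val h2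
      rw [hcast _ (by omega), hcast _ (by omega)] at h3
      exact ZMod.val_injective L (by omega)
  · intro t
    have ht : t.val < L := ZMod.val_lt t
    have hone : (1 : ZMod L).val = 1 := by
      rw [show (1 : ZMod L) = ((1:ℕ) : ZMod L) by norm_num, ZMod.val_cast_of_lt (by omega)]
    have hadd : (t + 1).val = (t.val + 1) % L := by
      rw [ZMod.val_add, hone]
    simp only
    by_cases hlast : t.val = L - 1
    · have hz : (t + 1).val = 0 := by
        rw [hadd, hlast, Nat.sub_add_cancel (by omega), Nat.mod_self]
      have h0 : ¬ t.val = 0 := by omega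
      rw [if_neg h0, if_pos hz]
      have heq : j + (((t.val - 1 : ℕ)) : ZMod n) = i := by
        have h5 : t.val - 1 = e := by omega
        rw [h5, he, ZMod.natCast_val, ZMod.cast_id]
        ring
      rw [heq]
      exact hi
    · have hs1 : (t + 1).val = t.val + 1 := by
        rw [hadd, Nat.mod_eq_of_lt (by omega)]
      by_cases h0 : t.val = 0
      · rw [if_pos h0, if_neg (by omega : ¬ (t+1).val = 0)]
        have h5 : (t+1).val - 1 = 0 := by omega
        rw [h5]
        simpa using hj
      · rw [if_neg h0, if_neg (by omega : ¬ (t+1).val = 0)]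
        obtain ⟨s, hs⟩ : ∃ s, t.val = s + 1 := ⟨t.val - 1, by omega⟩
        have h6 : t.val - 1 = s := by omega
        have h7 : (t+1).val - 1 = s + 1 := by omega
        rw [h6, h7]
        have h8 : ((s + 1 : ℕ) : ZMod n) = (s : ZMod n) + 1 := by push_cast; ring
        rw [h8, ← add_assoc]
        exact hcadj (j + s)

lemma cycTwo {V : Type} (D : Digr V) {n : ℕ} [NeZero n] (c : ZMod n → V)
    (hcinj : Function.Injective c) (hcadj : ∀ i, D.Adj (c i) (c (i+1)))
    {u v : V} (hu : u ∉ Set.range c) (hv : v ∉ Set.range c) (huv : u ≠ v)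
    (harc : D.Adj u v) {i j : ZMod n} (hi : D.Adj (c i) u) (hj : D.Adj v (c j)) :
    D.IsDiCycle (n := (i - j).val + 3)
      (fun t => if t.val = 0 then u else if t.val = 1 then v
        else c (j + ((t.val - 2 : ℕ) : ZMod n))) := by
  have hen : (i - j).val < n := ZMod.val_lt _
  set e := (i - j).val with he
  set L := e + 3 with hL
  haveI : NeZero L := ⟨by omega⟩
  have hcast : ∀ s : ℕ, s ≤ e → (((s : ℕ) : ZMod n)).val = s := by
    intro s hs
    exact ZMod.val_cast_of_lt (by omega)
  refine ⟨by omega, ?_, ?_⟩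
  · intro t t' h
    simp only at h
    have ht : t.val < L := ZMod.val_lt t
    have ht' : t'.val < L := ZMod.val_lt t'
    by_cases h0 : t.val = 0 <;> by_cases h0' : t'.val = 0
    · exact ZMod.val_injective L (by omega)
    · rw [if_pos h0, if_neg h0'] at h
      by_cases h1' : t'.val = 1
      · rw [if_pos h1'] at h; exact absurd h huv
      · rw [if_neg h1'] at h; exact absurd ⟨_, h.symm⟩ hu
    · rw [if_neg h0, if_pos h0'] at h
      by_cases h1 : t.val = 1
      · rw [if_pos h1] at h; exact absurd h.symm huv
      · rw [if_neg h1] at h; exact absurd ⟨_, h⟩ hu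
    · rw [if_neg h0, if_neg h0'] at h
      by_cases h1 : t.val = 1 <;> by_cases h1' : t'.val = 1
      · exact ZMod.val_injective L (by omega)
      · rw [if_pos h1, if_neg h1'] at h; exact absurd ⟨_, h.symm⟩ hv
      · rw [if_neg h1, if_pos h1'] at h; exact absurd ⟨_, h⟩ hv
      · rw [if_neg h1, if_neg h1'] at h
        have h2 := congrArg (f := fun x : ZMod n => x - j) (hcinj h)
        simp only [add_sub_cancel_left] at h2
        have h3 := congrArg ZMod.val h2
        rw [hcast _ (by omega), hcast _ (by omega)] at h3
        exact ZMod.val_injective L (by omega)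
  · intro t
    have ht : t.val < L := ZMod.val_lt t
    have hone : (1 : ZMod L).val = 1 := by
      rw [show (1 : ZMod L) = ((1:ℕ) : ZMod L) by norm_num, ZMod.val_cast_of_lt (by omega)]
    have hadd : (t + 1).val = (t.val + 1) % L := by
      rw [ZMod.val_add, hone]
    simp only
    by_cases hlast : t.val = L - 1
    · have hz : (t + 1).val = 0 := by
        rw [hadd, hlast, Nat.sub_add_cancel (by omega), Nat.mod_self]
      have h0 : ¬ t.val = 0 := by omega
      have h1 : ¬ t.val = 1 := by omega
      rw [if_neg h0, if_neg h1, if_pos hz]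
      have heq : j + (((t.val - 2 : ℕ)) : ZMod n) = i := by
        have h5 : t.val - 2 = e := by omega
        rw [h5, he, ZMod.natCast_val, ZMod.cast_id]
        ring
      rw [heq]
      exact hi
    · have hs1 : (t + 1).val = t.val + 1 := by
        rw [hadd, Nat.mod_eq_of_lt (by omega)]
      by_cases h0 : t.val = 0
      · rw [if_pos h0, if_neg (by omega : ¬ (t+1).val = 0), if_pos (by omega : (t+1).val = 1)]
        exact harc
      · by_cases h1 : t.val = 1
        · rw [if_neg h0, if_pos h1, if_neg (by omega : ¬ (t+1).val = 0),
            if_neg (by omega : ¬ (t+1).val = 1)]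
          have h5 : (t+1).val - 2 = 0 := by omega
          rw [h5]
          simpa using hj
        · rw [if_neg h0, if_neg h1, if_neg (by omega : ¬ (t+1).val = 0),
            if_neg (by omega : ¬ (t+1).val = 1)]
          obtain ⟨s, hs⟩ : ∃ s, t.val = s + 2 := ⟨t.val - 2, by omega⟩
          have h6 : t.val - 2 = s := by omega
          have h7 : (t+1).val - 2 = s + 1 := by omega
          rw [h6, h7]
          have h8 : ((s + 1 : ℕ) : ZMod n) = (s : ZMod n) + 1 := by push_cast; ring
          rw [h8, ← add_assoc]
          exact hcadj (j + s)

set_option maxHeartbeats 0 in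
lemma mono_cycle_eq {k : ℕ} [NeZero k] {nz hh : ℤ}
    (hn31 : 31 ≤ nz) (hno : nz % 2 = 1) (hhn : 2 * hh = nz + 1)
    (Ii Jj At Bt : ZMod k → ℤ)
    (hRange : ∀ t, 0 ≤ Ii t ∧ Ii t < nz ∧ 0 ≤ Jj t ∧ Jj t < nz)
    (hABr : ∀ t, 0 ≤ At t ∧ At t < nz ∧ 0 ≤ Bt t ∧ Bt t < nz)
    (hAd : ∀ t, Jj t - Ii t = At t ∨ Jj t - Ii t = At t - nz)
    (hBd : ∀ t, Ii t - Jj (t+1) = Bt t ∨ Ii t - Jj (t+1) = Bt t - nz)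
    (hAZ : ∀ t, At t ≠ 0 ∧ At t ≠ 1 ∧ (At t % 2 = 0 → At t = 2))
    (hBZ : ∀ t, Bt t ≠ 0 ∧ (Bt t % 2 = 0 → nz ≤ Bt t + 3))
    (hcolI : ∀ t, Ii t % 2 = Ii 0 % 2) (hcolJ : ∀ t, Jj t % 2 = Jj 0 % 2)
    (qdI : ∀ t, (Ii t < hh ∧ Ii 0 < hh) ∨ (hh ≤ Ii t ∧ hh ≤ Ii 0))
    (qdJ : ∀ t, (Jj t < hh ∧ Jj 0 < hh) ∨ (hh ≤ Jj t ∧ hh ≤ Jj 0)) :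
    Ii 0 = Ii (0+1) := by
  have hsum : ∑ t : ZMod k, (Jj t - Jj (t + 1)) = 0 := by
    rw [Finset.sum_sub_distrib]
    have hre : ∑ t : ZMod k, Jj (t + 1) = ∑ t : ZMod k, Jj t := by
      simpa using Equiv.sum_comp (Equiv.addRight (1 : ZMod k)) Jj
    rw [hre, sub_self]
  by_cases hI0 : Ii 0 < hh <;> by_cases hJ0 : Jj 0 < hh <;>
    by_cases hpar : (Jj 0 - Ii 0) % 2 = 0
  · have hIall : ∀ t : ZMod k, Ii t < hh := fun t => by have := qdI t; omega
    have hJall : ∀ t : ZMod k, Jj t < hh := fun t => by have := qdJ t; omega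
    have hdir : ∀ t : ZMod k, Jj t - Jj (t + 1) ≤ 0 := by
      intro t
      have p1 := hAd t
      have p3 := hBd t
      have p2 := hAZ t
      have p4 := hBZ t
      have r1 := hRange t
      have r2 := hRange (t + 1)
      have r3 := hABr t
      have c1 := hcolI t
      have c2 := hcolJ t
      have c3 := hcolI (t + 1)
      have c4 := hcolJ (t + 1)
      have q1 := hIall t
      have q2 := hJall t
      have q3 := hIall (t + 1)
      have q4 := hJall (t + 1)
      omega
    have hall : ∀ t : ZMod k, Jj t - Jj (t + 1) = 0 := fun t =>
      (Finset.sum_eq_zero_iff_of_nonpos (fun t _ => hdir t)).mp hsum t (Finset.mem_univ t)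
    have hz0 := hall 0
    have hz1 := hall (0 + 1)
    have p1 := hAd 0
    have p3 := hBd 0
    have p2 := hAZ 0
    have p4 := hBZ 0
    have p1' := hAd (0 + 1)
    have p3' := hBd (0 + 1)
    have p2' := hAZ (0 + 1)
    have p4' := hBZ (0 + 1)
    have r1 := hRange 0
    have r2 := hRange (0 + 1)
    have r3 := hRange (0 + 1 + 1)
    have rr1 := hABr 0
    have rr2 := hABr (0 + 1)
    have c1 := hcolI (0 + 1)
    have c2 := hcolJ (0 + 1)
    have c3 := hcolI (0 + 1 + 1)
    have c4 := hcolJ (0 + 1 + 1)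
    have q1 := hIall 0
    have q2 := hJall 0
    have q3 := hIall (0 + 1)
    have q4 := hJall (0 + 1)
    have q5 := hIall (0 + 1 + 1)
    have q6 := hJall (0 + 1 + 1)
    omega
  · have hIall : ∀ t : ZMod k, Ii t < hh := fun t => by have := qdI t; omega
    have hJall : ∀ t : ZMod k, Jj t < hh := fun t => by have := qdJ t; omega
    have hdir : ∀ t : ZMod k, 0 ≤ Jj t - Jj (t + 1) := by
      intro t
      have p1 := hAd t
      have p3 := hBd t
      have p2 := hAZ t
      have p4 := hBZ t
      have r1 := hRange t
      have r2 := hRange (t + 1)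
      have r3 := hABr t
      have c1 := hcolI t
      have c2 := hcolJ t
      have c3 := hcolI (t + 1)
      have c4 := hcolJ (t + 1)
      have q1 := hIall t
      have q2 := hJall t
      have q3 := hIall (t + 1)
      have q4 := hJall (t + 1)
      omega
    have hall : ∀ t : ZMod k, Jj t - Jj (t + 1) = 0 := fun t =>
      (Finset.sum_eq_zero_iff_of_nonneg (fun t _ => hdir t)).mp hsum t (Finset.mem_univ t)
    have hz0 := hall 0
    have hz1 := hall (0 + 1)
    have p1 := hAd 0
    have p3 := hBd 0
    have p2 := hAZ 0
    have p4 := hBZ 0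
    have p1' := hAd (0 + 1)
    have p3' := hBd (0 + 1)
    have p2' := hAZ (0 + 1)
    have p4' := hBZ (0 + 1)
    have r1 := hRange 0
    have r2 := hRange (0 + 1)
    have r3 := hRange (0 + 1 + 1)
    have rr1 := hABr 0
    have rr2 := hABr (0 + 1)
    have c1 := hcolI (0 + 1)
    have c2 := hcolJ (0 + 1)
    have c3 := hcolI (0 + 1 + 1)
    have c4 := hcolJ (0 + 1 + 1)
    have q1 := hIall 0
    have q2 := hJall 0
    have q3 := hIall (0 + 1)
    have q4 := hJall (0 + 1)
    have q5 := hIall (0 + 1 + 1)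
    have q6 := hJall (0 + 1 + 1)
    omega
  · have hIall : ∀ t : ZMod k, Ii t < hh := fun t => by have := qdI t; omega
    have hJall : ∀ t : ZMod k, hh ≤ Jj t := fun t => by have := qdJ t; omega
    have hdir : ∀ t : ZMod k, Jj t - Jj (t + 1) ≤ 0 := by
      intro t
      have p1 := hAd t
      have p3 := hBd t
      have p2 := hAZ t
      have p4 := hBZ t
      have r1 := hRange t
      have r2 := hRange (t + 1)
      have r3 := hABr t
      have c1 := hcolI t
      have c2 := hcolJ t
      have c3 := hcolI (t + 1)
      have c4 := hcolJ (t + 1)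
      have q1 := hIall t
      have q2 := hJall t
      have q3 := hIall (t + 1)
      have q4 := hJall (t + 1)
      omega
    have hall : ∀ t : ZMod k, Jj t - Jj (t + 1) = 0 := fun t =>
      (Finset.sum_eq_zero_iff_of_nonpos (fun t _ => hdir t)).mp hsum t (Finset.mem_univ t)
    have hz0 := hall 0
    have hz1 := hall (0 + 1)
    have p1 := hAd 0
    have p3 := hBd 0
    have p2 := hAZ 0
    have p4 := hBZ 0
    have p1' := hAd (0 + 1)
    have p3' := hBd (0 + 1)
    have p2' := hAZ (0 + 1)
    have p4' := hBZ (0 + 1)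
    have r1 := hRange 0
    have r2 := hRange (0 + 1)
    have r3 := hRange (0 + 1 + 1)
    have rr1 := hABr 0
    have rr2 := hABr (0 + 1)
    have c1 := hcolI (0 + 1)
    have c2 := hcolJ (0 + 1)
    have c3 := hcolI (0 + 1 + 1)
    have c4 := hcolJ (0 + 1 + 1)
    have q1 := hIall 0
    have q2 := hJall 0
    have q3 := hIall (0 + 1)
    have q4 := hJall (0 + 1)
    have q5 := hIall (0 + 1 + 1)
    have q6 := hJall (0 + 1 + 1)
    omega
  · have hIall : ∀ t : ZMod k, Ii t < hh := fun t => by have := qdI t; omega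
    have hJall : ∀ t : ZMod k, hh ≤ Jj t := fun t => by have := qdJ t; omega
    have hdir : ∀ t : ZMod k, 0 ≤ Jj t - Jj (t + 1) := by
      intro t
      have p1 := hAd t
      have p3 := hBd t
      have p2 := hAZ t
      have p4 := hBZ t
      have r1 := hRange t
      have r2 := hRange (t + 1)
      have r3 := hABr t
      have c1 := hcolI t
      have c2 := hcolJ t
      have c3 := hcolI (t + 1)
      have c4 := hcolJ (t + 1)
      have q1 := hIall t
      have q2 := hJall t
      have q3 := hIall (t + 1)
      have q4 := hJall (t + 1)
      omega
    have hall : ∀ t : ZMod k, Jj t - Jj (t + 1) = 0 := fun t =>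
      (Finset.sum_eq_zero_iff_of_nonneg (fun t _ => hdir t)).mp hsum t (Finset.mem_univ t)
    have hz0 := hall 0
    have hz1 := hall (0 + 1)
    have p1 := hAd 0
    have p3 := hBd 0
    have p2 := hAZ 0
    have p4 := hBZ 0
    have p1' := hAd (0 + 1)
    have p3' := hBd (0 + 1)
    have p2' := hAZ (0 + 1)
    have p4' := hBZ (0 + 1)
    have r1 := hRange 0
    have r2 := hRange (0 + 1)
    have r3 := hRange (0 + 1 + 1)
    have rr1 := hABr 0
    have rr2 := hABr (0 + 1)
    have c1 := hcolI (0 + 1)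
    have c2 := hcolJ (0 + 1)
    have c3 := hcolI (0 + 1 + 1)
    have c4 := hcolJ (0 + 1 + 1)
    have q1 := hIall 0
    have q2 := hJall 0
    have q3 := hIall (0 + 1)
    have q4 := hJall (0 + 1)
    have q5 := hIall (0 + 1 + 1)
    have q6 := hJall (0 + 1 + 1)
    omega
  · have hIall : ∀ t : ZMod k, hh ≤ Ii t := fun t => by have := qdI t; omega
    have hJall : ∀ t : ZMod k, Jj t < hh := fun t => by have := qdJ t; omega
    have hdir : ∀ t : ZMod k, 0 ≤ Jj t - Jj (t + 1) := by
      intro t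
      have p1 := hAd t
      have p3 := hBd t
      have p2 := hAZ t
      have p4 := hBZ t
      have r1 := hRange t
      have r2 := hRange (t + 1)
      have r3 := hABr t
      have c1 := hcolI t
      have c2 := hcolJ t
      have c3 := hcolI (t + 1)
      have c4 := hcolJ (t + 1)
      have q1 := hIall t
      have q2 := hJall t
      have q3 := hIall (t + 1)
      have q4 := hJall (t + 1)
      omega
    have hall : ∀ t : ZMod k, Jj t - Jj (t + 1) = 0 := fun t =>
      (Finset.sum_eq_zero_iff_of_nonneg (fun t _ => hdir t)).mp hsum t (Finset.mem_univ t)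
    have hz0 := hall 0
    have hz1 := hall (0 + 1)
    have p1 := hAd 0
    have p3 := hBd 0
    have p2 := hAZ 0
    have p4 := hBZ 0
    have p1' := hAd (0 + 1)
    have p3' := hBd (0 + 1)
    have p2' := hAZ (0 + 1)
    have p4' := hBZ (0 + 1)
    have r1 := hRange 0
    have r2 := hRange (0 + 1)
    have r3 := hRange (0 + 1 + 1)
    have rr1 := hABr 0
    have rr2 := hABr (0 + 1)
    have c1 := hcolI (0 + 1)
    have c2 := hcolJ (0 + 1)
    have c3 := hcolI (0 + 1 + 1)
    have c4 := hcolJ (0 + 1 + 1)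
    have q1 := hIall 0
    have q2 := hJall 0
    have q3 := hIall (0 + 1)
    have q4 := hJall (0 + 1)
    have q5 := hIall (0 + 1 + 1)
    have q6 := hJall (0 + 1 + 1)
    omega
  · have hIall : ∀ t : ZMod k, hh ≤ Ii t := fun t => by have := qdI t; omega
    have hJall : ∀ t : ZMod k, Jj t < hh := fun t => by have := qdJ t; omega
    have hdir : ∀ t : ZMod k, Jj t - Jj (t + 1) ≤ 0 := by
      intro t
      have p1 := hAd t
      have p3 := hBd t
      have p2 := hAZ t
      have p4 := hBZ t
      have r1 := hRange t
      have r2 := hRange (t + 1)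
      have r3 := hABr t
      have c1 := hcolI t
      have c2 := hcolJ t
      have c3 := hcolI (t + 1)
      have c4 := hcolJ (t + 1)
      have q1 := hIall t
      have q2 := hJall t
      have q3 := hIall (t + 1)
      have q4 := hJall (t + 1)
      omega
    have hall : ∀ t : ZMod k, Jj t - Jj (t + 1) = 0 := fun t =>
      (Finset.sum_eq_zero_iff_of_nonpos (fun t _ => hdir t)).mp hsum t (Finset.mem_univ t)
    have hz0 := hall 0
    have hz1 := hall (0 + 1)
    have p1 := hAd 0
    have p3 := hBd 0
    have p2 := hAZ 0
    have p4 := hBZ 0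
    have p1' := hAd (0 + 1)
    have p3' := hBd (0 + 1)
    have p2' := hAZ (0 + 1)
    have p4' := hBZ (0 + 1)
    have r1 := hRange 0
    have r2 := hRange (0 + 1)
    have r3 := hRange (0 + 1 + 1)
    have rr1 := hABr 0
    have rr2 := hABr (0 + 1)
    have c1 := hcolI (0 + 1)
    have c2 := hcolJ (0 + 1)
    have c3 := hcolI (0 + 1 + 1)
    have c4 := hcolJ (0 + 1 + 1)
    have q1 := hIall 0
    have q2 := hJall 0
    have q3 := hIall (0 + 1)
    have q4 := hJall (0 + 1)
    have q5 := hIall (0 + 1 + 1)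
    have q6 := hJall (0 + 1 + 1)
    omega
  · have hIall : ∀ t : ZMod k, hh ≤ Ii t := fun t => by have := qdI t; omega
    have hJall : ∀ t : ZMod k, hh ≤ Jj t := fun t => by have := qdJ t; omega
    have hdir : ∀ t : ZMod k, Jj t - Jj (t + 1) ≤ 0 := by
      intro t
      have p1 := hAd t
      have p3 := hBd t
      have p2 := hAZ t
      have p4 := hBZ t
      have r1 := hRange t
      have r2 := hRange (t + 1)
      have r3 := hABr t
      have c1 := hcolI t
      have c2 := hcolJ t
      have c3 := hcolI (t + 1)
      have c4 := hcolJ (t + 1)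
      have q1 := hIall t
      have q2 := hJall t
      have q3 := hIall (t + 1)
      have q4 := hJall (t + 1)
      omega
    have hall : ∀ t : ZMod k, Jj t - Jj (t + 1) = 0 := fun t =>
      (Finset.sum_eq_zero_iff_of_nonpos (fun t _ => hdir t)).mp hsum t (Finset.mem_univ t)
    have hz0 := hall 0
    have hz1 := hall (0 + 1)
    have p1 := hAd 0
    have p3 := hBd 0
    have p2 := hAZ 0
    have p4 := hBZ 0
    have p1' := hAd (0 + 1)
    have p3' := hBd (0 + 1)
    have p2' := hAZ (0 + 1)
    have p4' := hBZ (0 + 1)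
    have r1 := hRange 0
    have r2 := hRange (0 + 1)
    have r3 := hRange (0 + 1 + 1)
    have rr1 := hABr 0
    have rr2 := hABr (0 + 1)
    have c1 := hcolI (0 + 1)
    have c2 := hcolJ (0 + 1)
    have c3 := hcolI (0 + 1 + 1)
    have c4 := hcolJ (0 + 1 + 1)
    have q1 := hIall 0
    have q2 := hJall 0
    have q3 := hIall (0 + 1)
    have q4 := hJall (0 + 1)
    have q5 := hIall (0 + 1 + 1)
    have q6 := hJall (0 + 1 + 1)
    omega
  · have hIall : ∀ t : ZMod k, hh ≤ Ii t := fun t => by have := qdI t; omega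
    have hJall : ∀ t : ZMod k, hh ≤ Jj t := fun t => by have := qdJ t; omega
    have hdir : ∀ t : ZMod k, 0 ≤ Jj t - Jj (t + 1) := by
      intro t
      have p1 := hAd t
      have p3 := hBd t
      have p2 := hAZ t
      have p4 := hBZ t
      have r1 := hRange t
      have r2 := hRange (t + 1)
      have r3 := hABr t
      have c1 := hcolI t
      have c2 := hcolJ t
      have c3 := hcolI (t + 1)
      have c4 := hcolJ (t + 1)
      have q1 := hIall t
      have q2 := hJall t
      have q3 := hIall (t + 1)
      have q4 := hJall (t + 1)
      omega
    have hall : ∀ t : ZMod k, Jj t - Jj (t + 1) = 0 := fun t =>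
      (Finset.sum_eq_zero_iff_of_nonneg (fun t _ => hdir t)).mp hsum t (Finset.mem_univ t)
    have hz0 := hall 0
    have hz1 := hall (0 + 1)
    have p1 := hAd 0
    have p3 := hBd 0
    have p2 := hAZ 0
    have p4 := hBZ 0
    have p1' := hAd (0 + 1)
    have p3' := hBd (0 + 1)
    have p2' := hAZ (0 + 1)
    have p4' := hBZ (0 + 1)
    have r1 := hRange 0
    have r2 := hRange (0 + 1)
    have r3 := hRange (0 + 1 + 1)
    have rr1 := hABr 0
    have rr2 := hABr (0 + 1)
    have c1 := hcolI (0 + 1)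
    have c2 := hcolJ (0 + 1)
    have c3 := hcolI (0 + 1 + 1)
    have c4 := hcolJ (0 + 1 + 1)
    have q1 := hIall 0
    have q2 := hJall 0
    have q3 := hIall (0 + 1)
    have q4 := hJall (0 + 1)
    have q5 := hIall (0 + 1 + 1)
    have q6 := hJall (0 + 1 + 1)
    omega


set_option maxHeartbeats 1000000 in
/-- In a triangle-free digraph with no induced `P⃗₆`, for a minimum-length odd
directed cycle `c`, the set `N⁺(C) ∩ N⁻(C)` induces a subdigraph of dichromatic
number at most 30. -/
theorem stmt17 {V : Type} (D : Digr V) (hT : D.TriangleFree)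
    (hP : ¬ ∃ p : Fin 6 → V, D.InducedP6 p)
    {n : ℕ} (c : ZMod n → V) (hodd : Odd n) (hc : D.IsDiCycle c)
    (hmin : ∀ (m : ℕ) (c' : ZMod m → V), Odd m → D.IsDiCycle c' → n ≤ m) :
    (D.induce (D.Nout (Set.range c) ∩ D.Nin (Set.range c))).DichromAtMost 30 := by
  obtain ⟨hn0, hcinj, hcadj⟩ := hc
  haveI : NeZero n := ⟨hn0.ne'⟩
  have hno : n % 2 = 1 := Nat.odd_iff.mp hodd
  set W : Set V := D.Nout (Set.range c) ∩ D.Nin (Set.range c) with hWdef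
  have hIout : ∀ w : W, ∃ idx : ZMod n, D.Adj (c idx) w.1 := by
    intro w
    obtain ⟨x, hx, hadj⟩ := w.2.1.2
    obtain ⟨idx, rfl⟩ := hx
    exact ⟨idx, hadj⟩
  have hJout : ∀ w : W, ∃ idx : ZMod n, D.Adj w.1 (c idx) := by
    intro w
    obtain ⟨x, hx, hadj⟩ := w.2.2.2
    obtain ⟨idx, rfl⟩ := hx
    exact ⟨idx, hadj⟩
  obtain ⟨iIdx, hiAdj⟩ : ∃ g : W → ZMod n, ∀ w : W, D.Adj (c (g w)) w.1 :=
    ⟨fun w => (hIout w).choose, fun w => (hIout w).choose_spec⟩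
  obtain ⟨jIdx, hjAdj⟩ : ∃ g : W → ZMod n, ∀ w : W, D.Adj w.1 (c (g w)) :=
    ⟨fun w => (hJout w).choose, fun w => (hJout w).choose_spec⟩
  have hnotin : ∀ w : W, w.1 ∉ Set.range c := fun w => w.2.1.1
  have triIn : ∀ (u w : W), iIdx u = iIdx w → D.Adj u.1 w.1 → False := by
    intro u w hiw harc
    apply hT
    refine ⟨u.1, w.1, c (iIdx u), Or.inl harc, Or.inr ?_, Or.inr (hiAdj u)⟩
    rw [hiw]
    exact hiAdj w
  have keyA : ∀ w : W, (jIdx w - iIdx w).val ≠ 0 ∧ (jIdx w - iIdx w).val ≠ 1 ∧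
      ((jIdx w - iIdx w).val % 2 = 0 → (jIdx w - iIdx w).val = 2) := by
    intro w
    have hA0 : (jIdx w - iIdx w).val ≠ 0 := by
      intro h0
      have hji : jIdx w = iIdx w := by
        have : jIdx w - iIdx w = 0 := by
          rwa [← ZMod.val_eq_zero]
        exact sub_eq_zero.mp this
      apply D.no_anti _ _ (hjAdj w)
      rw [hji]
      exact hiAdj w
    refine ⟨hA0, ?_, ?_⟩
    · intro h1
      have hn2 : 1 < n := by
        have := ZMod.val_lt (jIdx w - iIdx w)
        omega
      have hji : jIdx w = iIdx w + 1 := by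
        have hv1 : (1 : ZMod n).val = 1 := by
          rw [show (1 : ZMod n) = ((1:ℕ) : ZMod n) by norm_num, ZMod.val_cast_of_lt hn2]
        have h2 : jIdx w - iIdx w = 1 := by
          apply ZMod.val_injective
          rw [h1, hv1]
        rw [← h2]
        ring
      apply hT
      refine ⟨c (iIdx w), w.1, c (iIdx w + 1), Or.inl (hiAdj w), Or.inl ?_, Or.inl (hcadj _)⟩
      rw [← hji]
      exact hjAdj w
    · intro heven
      by_contra hne
      have hij0 : iIdx w ≠ jIdx w := by
        intro hh
        apply hA0
        rw [hh, sub_self, ZMod.val_zero]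
      have hd : (n:ℕ) ∣ ((iIdx w - jIdx w).val + (jIdx w - iIdx w).val) := by
        rw [← ZMod.natCast_eq_zero_iff]
        push_cast
        rw [ZMod.natCast_val, ZMod.cast_id, ZMod.natCast_val, ZMod.cast_id]
        ring
      have l1 : (iIdx w - jIdx w).val < n := ZMod.val_lt _
      have l2 : (jIdx w - iIdx w).val < n := ZMod.val_lt _
      have l3 : (iIdx w - jIdx w).val ≠ 0 := by
        rw [Ne, ZMod.val_eq_zero, sub_eq_zero]
        exact hij0
      have hsumn : (iIdx w - jIdx w).val + (jIdx w - iIdx w).val = n := by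
        obtain ⟨m, hm⟩ := hd
        rcases m with _ | _ | m
        · omega
        · omega
        · have hq : n * (m + 2) = n * m + 2 * n := by ring
          rw [hq] at hm
          generalize n * m = q at hm
          omega
      have hoddlen : Odd ((iIdx w - jIdx w).val + 2) := by
        rw [Nat.odd_iff]
        omega
      have hge := hmin _ _ hoddlen (cycOne D c hcinj hcadj (hnotin w) (hiAdj w) (hjAdj w))
      omega
  have keyB : ∀ (u w : W), D.Adj u.1 w.1 → (iIdx u - jIdx w).val ≠ 0 ∧
      ((iIdx u - jIdx w).val % 2 = 0 → n ≤ (iIdx u - jIdx w).val + 3) := by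
    intro u w harc
    constructor
    · intro h0
      have hji : iIdx u = jIdx w := by
        have : iIdx u - jIdx w = 0 := by
          rwa [← ZMod.val_eq_zero]
        exact sub_eq_zero.mp this
      apply hT
      refine ⟨u.1, w.1, c (jIdx w), Or.inl harc, Or.inl (hjAdj w), Or.inr ?_⟩
      rw [← hji]
      exact hiAdj u
    · intro heven
      have hune : u.1 ≠ w.1 := by
        intro he
        apply D.no_anti _ _ harc
        rw [he] at harc ⊢
        exact harc
      have hoddlen : Odd ((iIdx u - jIdx w).val + 3) := by
        rw [Nat.odd_iff]
        omega
      exact hmin _ _ hoddlen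
        (cycTwo D c hcinj hcadj (hnotin u) (hnotin w) hune harc (hiAdj u) (hjAdj w))
  by_cases hn31 : n < 31
  · refine ⟨fun w => ⟨(iIdx w).val, by have := ZMod.val_lt (iIdx w); omega⟩, ?_⟩
    intro col
    rintro ⟨k, z, hzc, hzm⟩
    have harc : D.Adj (z 0).1 (z (0+1)).1 := hzc.2.2 0
    have h01 : (iIdx (z 0)).val = (iIdx (z (0+1))).val := by
      have e0 := hzm 0
      have e1 := hzm (0+1)
      simp only [Set.mem_setOf_eq] at e0 e1
      have := e0.trans e1.symm
      exact congrArg Fin.val this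
    exact triIn _ _ (ZMod.val_injective n h01) harc
  · push_neg at hn31
    have h2h : 2 * ((n+1)/2) = n + 1 := by omega
    refine ⟨fun w => ⟨(if (iIdx w).val % 2 = 0 then 0 else 1)
        + 2 * (if (jIdx w).val % 2 = 0 then 0 else 1)
        + 4 * (if (iIdx w).val < (n+1)/2 then 0 else 1)
        + 8 * (if (jIdx w).val < (n+1)/2 then 0 else 1), by split_ifs <;> norm_num⟩, ?_⟩
    intro col
    rintro ⟨k, z, hzc, hzm⟩
    haveI : NeZero k := ⟨hzc.1.ne'⟩
    have harc : ∀ t : ZMod k, D.Adj (z t).1 (z (t+1)).1 := hzc.2.2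
    have hmono : ∀ t : ZMod k,
        ((iIdx (z t)).val % 2 = (iIdx (z 0)).val % 2) ∧
        ((jIdx (z t)).val % 2 = (jIdx (z 0)).val % 2) ∧
        (((iIdx (z t)).val < (n+1)/2 ∧ (iIdx (z 0)).val < (n+1)/2) ∨
          ((n+1)/2 ≤ (iIdx (z t)).val ∧ (n+1)/2 ≤ (iIdx (z 0)).val)) ∧
        (((jIdx (z t)).val < (n+1)/2 ∧ (jIdx (z 0)).val < (n+1)/2) ∨
          ((n+1)/2 ≤ (jIdx (z t)).val ∧ (n+1)/2 ≤ (jIdx (z 0)).val)) := by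
      intro t
      have e0 := hzm t
      have e1 := hzm 0
      simp only [Set.mem_setOf_eq] at e0 e1
      have hf := e0.trans e1.symm
      simp only [Fin.mk.injEq] at hf
      split_ifs at hf <;> omega
    obtain ⟨Ii, hIi⟩ : ∃ g : ZMod k → ℤ, ∀ t, g t = ((iIdx (z t)).val : ℤ) :=
      ⟨_, fun _ => rfl⟩
    obtain ⟨Jj, hJj⟩ : ∃ g : ZMod k → ℤ, ∀ t, g t = ((jIdx (z t)).val : ℤ) :=
      ⟨_, fun _ => rfl⟩
    obtain ⟨At, hAt⟩ : ∃ g : ZMod k → ℤ, ∀ t, g t = (((jIdx (z t)) - (iIdx (z t))).val : ℤ) :=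
      ⟨_, fun _ => rfl⟩
    obtain ⟨Bt, hBt⟩ : ∃ g : ZMod k → ℤ, ∀ t, g t = (((iIdx (z t)) - (jIdx (z (t+1)))).val : ℤ) :=
      ⟨_, fun _ => rfl⟩
    have hRange : ∀ t, 0 ≤ Ii t ∧ Ii t < (n:ℤ) ∧ 0 ≤ Jj t ∧ Jj t < (n:ℤ) := by
      intro t
      rw [hIi t, hJj t]
      refine ⟨by positivity, by exact_mod_cast ZMod.val_lt _, by positivity,
        by exact_mod_cast ZMod.val_lt _⟩
    have hABr : ∀ t, 0 ≤ At t ∧ At t < (n:ℤ) ∧ 0 ≤ Bt t ∧ Bt t < (n:ℤ) := by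
      intro t
      rw [hAt t, hBt t]
      refine ⟨by positivity, by exact_mod_cast ZMod.val_lt _, by positivity,
        by exact_mod_cast ZMod.val_lt _⟩
    have hAd : ∀ t, Jj t - Ii t = At t ∨ Jj t - Ii t = At t - (n:ℤ) := by
      intro t
      rw [hIi t, hJj t, hAt t]
      have hdvd : (n:ℤ) ∣ (((jIdx (z t)).val : ℤ) - ((iIdx (z t)).val : ℤ)
          - (((jIdx (z t)) - (iIdx (z t))).val : ℤ)) := by
        rw [← ZMod.intCast_zmod_eq_zero_iff_dvd]
        push_cast
        rw [ZMod.natCast_val, ZMod.cast_id, ZMod.natCast_val, ZMod.cast_id,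
          ZMod.natCast_val, ZMod.cast_id]
        ring
      obtain ⟨m, hm⟩ := hdvd
      have l1 : ((iIdx (z t)).val : ℤ) < n := by exact_mod_cast ZMod.val_lt _
      have l2 : ((jIdx (z t)).val : ℤ) < n := by exact_mod_cast ZMod.val_lt _
      have l3 : (((jIdx (z t)) - (iIdx (z t))).val : ℤ) < n := by exact_mod_cast ZMod.val_lt _
      have l4 : (0:ℤ) ≤ ((iIdx (z t)).val : ℤ) := by positivity
      have l5 : (0:ℤ) ≤ ((jIdx (z t)).val : ℤ) := by positivity
      have l6 : (0:ℤ) ≤ (((jIdx (z t)) - (iIdx (z t))).val : ℤ) := by positivity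
      have hm01 : m = 0 ∨ m = -1 := by
        rcases le_or_gt 0 m with hm0 | hm0
        · left
          by_contra hne
          have h1m : (1:ℤ) ≤ m := by omega
          have : (n:ℤ) * 1 ≤ n * m := by
            apply mul_le_mul_of_nonneg_left h1m (by positivity)
          linarith
        · right
          by_contra hne
          have h2m : m ≤ -2 := by omega
          have : (n:ℤ) * m ≤ n * (-2) := by
            apply mul_le_mul_of_nonneg_left h2m (by positivity)
          linarith
      rcases hm01 with rfl | rfl
      · left; simp only [mul_zero] at hm; linarith
      · right; simp only [mul_neg_one] at hm; linarith
    have hBd : ∀ t, Ii t - Jj (t+1) = Bt t ∨ Ii t - Jj (t+1) = Bt t - (n:ℤ) := by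
      intro t
      rw [hIi t, hJj (t+1), hBt t]
      have hdvd : (n:ℤ) ∣ (((iIdx (z t)).val : ℤ) - ((jIdx (z (t+1))).val : ℤ)
          - (((iIdx (z t)) - (jIdx (z (t+1)))).val : ℤ)) := by
        rw [← ZMod.intCast_zmod_eq_zero_iff_dvd]
        push_cast
        rw [ZMod.natCast_val, ZMod.cast_id, ZMod.natCast_val, ZMod.cast_id,
          ZMod.natCast_val, ZMod.cast_id]
        ring
      obtain ⟨m, hm⟩ := hdvd
      have l1 : ((iIdx (z t)).val : ℤ) < n := by exact_mod_cast ZMod.val_lt _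
      have l2 : ((jIdx (z (t+1))).val : ℤ) < n := by exact_mod_cast ZMod.val_lt _
      have l3 : (((iIdx (z t)) - (jIdx (z (t+1)))).val : ℤ) < n := by exact_mod_cast ZMod.val_lt _
      have l4 : (0:ℤ) ≤ ((iIdx (z t)).val : ℤ) := by positivity
      have l5 : (0:ℤ) ≤ ((jIdx (z (t+1))).val : ℤ) := by positivity
      have l6 : (0:ℤ) ≤ (((iIdx (z t)) - (jIdx (z (t+1)))).val : ℤ) := by positivity
      have hm01 : m = 0 ∨ m = -1 := by
        rcases le_or_gt 0 m with hm0 | hm0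
        · left
          by_contra hne
          have h1m : (1:ℤ) ≤ m := by omega
          have : (n:ℤ) * 1 ≤ n * m := by
            apply mul_le_mul_of_nonneg_left h1m (by positivity)
          linarith
        · right
          by_contra hne
          have h2m : m ≤ -2 := by omega
          have : (n:ℤ) * m ≤ n * (-2) := by
            apply mul_le_mul_of_nonneg_left h2m (by positivity)
          linarith
      rcases hm01 with rfl | rfl
      · left; simp only [mul_zero] at hm; linarith
      · right; simp only [mul_neg_one] at hm; linarith
    have hAZ : ∀ t, At t ≠ 0 ∧ At t ≠ 1 ∧ (At t % 2 = 0 → At t = 2) := by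
      intro t
      obtain ⟨a1, a2, a3⟩ := keyA (z t)
      rw [hAt t]
      refine ⟨by exact_mod_cast a1, by exact_mod_cast a2, ?_⟩
      intro hev
      have h' : ((jIdx (z t)) - (iIdx (z t))).val % 2 = 0 := by exact_mod_cast hev
      exact_mod_cast a3 h'
    have hBZ : ∀ t, Bt t ≠ 0 ∧ (Bt t % 2 = 0 → (n:ℤ) ≤ Bt t + 3) := by
      intro t
      obtain ⟨b1, b2⟩ := keyB (z t) (z (t+1)) (harc t)
      rw [hBt t]
      refine ⟨by exact_mod_cast b1, ?_⟩
      intro hev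
      have h' : ((iIdx (z t)) - (jIdx (z (t+1)))).val % 2 = 0 := by exact_mod_cast hev
      exact_mod_cast b2 h'
    have hcolI : ∀ t, Ii t % 2 = Ii 0 % 2 := by
      intro t
      rw [hIi t, hIi 0]
      have := (hmono t).1
      omega
    have hcolJ : ∀ t, Jj t % 2 = Jj 0 % 2 := by
      intro t
      rw [hJj t, hJj 0]
      have := (hmono t).2.1
      omega
    have qdI : ∀ t, (Ii t < (((n+1)/2 : ℕ) : ℤ) ∧ Ii 0 < (((n+1)/2 : ℕ) : ℤ)) ∨
        ((((n+1)/2 : ℕ) : ℤ) ≤ Ii t ∧ (((n+1)/2 : ℕ) : ℤ) ≤ Ii 0) := by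
      intro t
      rw [hIi t, hIi 0]
      have := (hmono t).2.2.1
      omega
    have qdJ : ∀ t, (Jj t < (((n+1)/2 : ℕ) : ℤ) ∧ Jj 0 < (((n+1)/2 : ℕ) : ℤ)) ∨
        ((((n+1)/2 : ℕ) : ℤ) ≤ Jj t ∧ (((n+1)/2 : ℕ) : ℤ) ≤ Jj 0) := by
      intro t
      rw [hJj t, hJj 0]
      have := (hmono t).2.2.2
      omega
    have hn31' : (31:ℤ) ≤ (n:ℤ) := by exact_mod_cast hn31
    have hno' : (n:ℤ) % 2 = 1 := by omega
    have hhn : 2 * (((n+1)/2 : ℕ) : ℤ) = (n:ℤ) + 1 := by exact_mod_cast h2h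
    have hfin := mono_cycle_eq hn31' hno' hhn Ii Jj At Bt hRange hABr hAd hBd hAZ hBZ
      hcolI hcolJ qdI qdJ
    rw [hIi 0, hIi (0+1)] at hfin
    have hvalEq : (iIdx (z 0)).val = (iIdx (z (0+1))).val := by exact_mod_cast hfin
    exact triIn _ _ (ZMod.val_injective n hvalEq) (harc 0)
end
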